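/- arXiv:1410.7790 — 7 statements merged into one kernel-verified Lean document; each statement's English description precedes it below -/
import Mathlib

section
/- Let S = ℝ × [0,π] with two-form ω = sin y dx ∧ dy, and let Φ ∈ 𝒟_L(S,ω) be a diffeomorphism of S commuting with the translation (x,y) ↦ (x+L,y), mapping each boundary component into itself, and preserving ω. Then the flux FLUX(Φ) := (1/(2L)) ∫∫_{[0,L]×[0,π]} (X(x,y) − x) sin y dx dy, where Φ = (X,Y), satisfies FLUX(Φ) = (1/2) ∫_{Φ∘α₀} x sin y dy, where α₀ : [0,π] → S, α₀(t) = (0,t). -/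
open Real intervalIntegral

noncomputable section

/-- Partial derivative in the first variable. -/
def pd1 (f : ℝ → ℝ → ℝ) (x y : ℝ) : ℝ := deriv (fun t => f t y) x

/-- Partial derivative in the second variable. -/
def pd2 (f : ℝ → ℝ → ℝ) (x y : ℝ) : ℝ := deriv (fun t => f x t) y

/-- The strip `S = ℝ × [0,π]`. -/
def strip : Set (ℝ × ℝ) := Set.univ ×ˢ Set.Icc (0:ℝ) π

/-- An element `Φ = (X,Y)` of the group `𝒟_L(S,ω)`: a diffeomorphism of the strip
`S = ℝ × [0,π]` (smooth up to the boundary, i.e. extending to a smooth map of the plane)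
which commutes with the translation `(x,y) ↦ (x+L,y)`, maps each boundary component of
`S` into itself, and preserves the two-form `ω = sin y dx ∧ dy` (expressed through the
Jacobian identity `sin (Y(x,y)) · det DΦ(x,y) = sin y`). -/
structure StripMap (L : ℝ) where
  X : ℝ → ℝ → ℝ
  Y : ℝ → ℝ → ℝ
  smooth : ContDiff ℝ (⊤ : ℕ∞) (fun p : ℝ × ℝ => (X p.1 p.2, Y p.1 p.2))
  mapsStrip : ∀ (x : ℝ), ∀ y ∈ Set.Icc (0:ℝ) π, Y x y ∈ Set.Icc (0:ℝ) π
  bijOn : Set.BijOn (fun p : ℝ × ℝ => (X p.1 p.2, Y p.1 p.2)) strip strip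
  invSmooth : ∃ F : ℝ × ℝ → ℝ × ℝ, ContDiff ℝ (⊤ : ℕ∞) F ∧
      ∀ p ∈ strip, F (X p.1 p.2, Y p.1 p.2) = p
  periodicX : ∀ (x : ℝ), ∀ y ∈ Set.Icc (0:ℝ) π, X (x + L) y = X x y + L
  periodicY : ∀ (x : ℝ), ∀ y ∈ Set.Icc (0:ℝ) π, Y (x + L) y = Y x y
  bdryLow : ∀ x : ℝ, Y x 0 = 0
  bdryHigh : ∀ x : ℝ, Y x π = π
  areaPres : ∀ (x : ℝ), ∀ y ∈ Set.Icc (0:ℝ) π,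
      Real.sin (Y x y) * (pd1 X x y * pd2 Y x y - pd2 X x y * pd1 Y x y) = Real.sin y

/-- The flux of `Φ ∈ 𝒟_L(S,ω)`:
`FLUX(Φ) = (1/(2L)) ∫∫_{[0,L]×[0,π]} (X(x,y) − x) sin y dx dy`. -/
def flux (L : ℝ) (Φ : StripMap L) : ℝ :=
  (1 / (2 * L)) * ∫ x in (0:ℝ)..L, ∫ y in (0:ℝ)..π, (Φ.X x y - x) * Real.sin y


private lemma hasDerivAt_fix2 {h : ℝ × ℝ → ℝ} (hh : Differentiable ℝ h) (x y : ℝ) :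
    HasDerivAt (fun t => h (t, y)) (fderiv ℝ h (x, y) (1, 0)) x := by
  have := (hh (x, y)).hasFDerivAt.comp_hasDerivAt x
    ((hasDerivAt_id x).prodMk (hasDerivAt_const x y))
  exact this

private lemma hasDerivAt_fix1 {h : ℝ × ℝ → ℝ} (hh : Differentiable ℝ h) (x y : ℝ) :
    HasDerivAt (fun t => h (x, t)) (fderiv ℝ h (x, y) (0, 1)) y := by
  have := (hh (x, y)).hasFDerivAt.comp_hasDerivAt y
    ((hasDerivAt_const y x).prodMk (hasDerivAt_id y))
  exact this

private def wfn (u v : ℝ × ℝ → ℝ) (p : ℝ × ℝ) : ℝ := (u p) ^ 2 / 2 * Real.sin (v p)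
private def ffn (u v : ℝ × ℝ → ℝ) (p : ℝ × ℝ) : ℝ := wfn u v p * fderiv ℝ v p (0, 1)
private def gfn (u v : ℝ × ℝ → ℝ) (p : ℝ × ℝ) : ℝ :=
  -(wfn u v p * fderiv ℝ v p (1, 0)) + p.1 * Real.cos p.2

variable {u v : ℝ × ℝ → ℝ}

private lemma wfn_contDiff (hu : ContDiff ℝ (⊤ : ℕ∞) u) (hv : ContDiff ℝ (⊤ : ℕ∞) v) :
    ContDiff ℝ (⊤ : ℕ∞) (wfn u v) :=
  ((hu.pow 2).div_const 2).mul (Real.contDiff_sin.comp hv)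

private lemma d2v_contDiff (hv : ContDiff ℝ (⊤ : ℕ∞) v) :
    ContDiff ℝ (⊤ : ℕ∞) (fun p => fderiv ℝ v p (0, 1)) :=
  (hv.fderiv_right (by simp)).clm_apply contDiff_const

private lemma d1v_contDiff (hv : ContDiff ℝ (⊤ : ℕ∞) v) :
    ContDiff ℝ (⊤ : ℕ∞) (fun p => fderiv ℝ v p (1, 0)) :=
  (hv.fderiv_right (by simp)).clm_apply contDiff_const

private lemma ffn_contDiff (hu : ContDiff ℝ (⊤ : ℕ∞) u) (hv : ContDiff ℝ (⊤ : ℕ∞) v) :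
    ContDiff ℝ (⊤ : ℕ∞) (ffn u v) :=
  (wfn_contDiff hu hv).mul (d2v_contDiff hv)

private lemma gfn_contDiff (hu : ContDiff ℝ (⊤ : ℕ∞) u) (hv : ContDiff ℝ (⊤ : ℕ∞) v) :
    ContDiff ℝ (⊤ : ℕ∞) (gfn u v) :=
  ((wfn_contDiff hu hv).mul (d1v_contDiff hv)).neg.add
    (contDiff_fst.mul (Real.contDiff_cos.comp contDiff_snd))

private lemma divergence_eq (hu : ContDiff ℝ (⊤ : ℕ∞) u) (hv : ContDiff ℝ (⊤ : ℕ∞) v) (x y : ℝ) :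
    fderiv ℝ (ffn u v) (x, y) (1, 0) + fderiv ℝ (gfn u v) (x, y) (0, 1) =
      u (x, y) * (Real.sin (v (x, y)) *
        (fderiv ℝ u (x, y) (1, 0) * fderiv ℝ v (x, y) (0, 1) -
         fderiv ℝ u (x, y) (0, 1) * fderiv ℝ v (x, y) (1, 0))) - x * Real.sin y := by
  have hud := hu.differentiable (by simp)
  have hvd := hv.differentiable (by simp)
  have hfd2 := (hv.fderiv_right (m := ((⊤ : ℕ∞) : WithTop ℕ∞)) (by simp)).differentiable (by simp)
  have hd2vd := (d2v_contDiff hv).differentiable (by simp)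
  have hd1vd := (d1v_contDiff hv).differentiable (by simp)
  -- x-derivative of f
  have hsq1 : HasDerivAt (fun t => (u (t, y)) ^ 2 / 2)
      (u (x, y) * fderiv ℝ u (x, y) (1, 0)) x := by
    have h := ((hasDerivAt_fix2 hud x y).pow 2).div_const 2
    exact h.congr_deriv (by push_cast; ring)
  have hsin1 : HasDerivAt (fun t => Real.sin (v (t, y)))
      (Real.cos (v (x, y)) * fderiv ℝ v (x, y) (1, 0)) x := by
    have := (Real.hasDerivAt_sin (v (x, y))).comp x (hasDerivAt_fix2 hvd x y)
    exact this
  have hw1 : HasDerivAt (fun t => wfn u v (t, y))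
      (u (x, y) * fderiv ℝ u (x, y) (1, 0) * Real.sin (v (x, y)) +
        (u (x, y)) ^ 2 / 2 * (Real.cos (v (x, y)) * fderiv ℝ v (x, y) (1, 0))) x :=
    hsq1.mul hsin1
  have hA1 : HasDerivAt (fun t => fderiv ℝ v (t, y) (0, 1))
      (fderiv ℝ (fun q => fderiv ℝ v q (0, 1)) (x, y) (1, 0)) x :=
    hasDerivAt_fix2 hd2vd x y
  have hf1 : HasDerivAt (fun t => ffn u v (t, y))
      ((u (x, y) * fderiv ℝ u (x, y) (1, 0) * Real.sin (v (x, y)) +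
        (u (x, y)) ^ 2 / 2 * (Real.cos (v (x, y)) * fderiv ℝ v (x, y) (1, 0))) *
          fderiv ℝ v (x, y) (0, 1) +
        wfn u v (x, y) * fderiv ℝ (fun q => fderiv ℝ v q (0, 1)) (x, y) (1, 0)) x :=
    hw1.mul hA1
  have ef : fderiv ℝ (ffn u v) (x, y) (1, 0) = _ :=
    (hasDerivAt_fix2 ((ffn_contDiff hu hv).differentiable (by simp)) x y).unique hf1
  -- y-derivative of g
  have hsq2 : HasDerivAt (fun t => (u (x, t)) ^ 2 / 2)
      (u (x, y) * fderiv ℝ u (x, y) (0, 1)) y := by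
    have h := ((hasDerivAt_fix1 hud x y).pow 2).div_const 2
    exact h.congr_deriv (by push_cast; ring)
  have hsin2 : HasDerivAt (fun t => Real.sin (v (x, t)))
      (Real.cos (v (x, y)) * fderiv ℝ v (x, y) (0, 1)) y := by
    have := (Real.hasDerivAt_sin (v (x, y))).comp y (hasDerivAt_fix1 hvd x y)
    exact this
  have hw2 : HasDerivAt (fun t => wfn u v (x, t))
      (u (x, y) * fderiv ℝ u (x, y) (0, 1) * Real.sin (v (x, y)) +
        (u (x, y)) ^ 2 / 2 * (Real.cos (v (x, y)) * fderiv ℝ v (x, y) (0, 1))) y :=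
    hsq2.mul hsin2
  have hA2 : HasDerivAt (fun t => fderiv ℝ v (x, t) (1, 0))
      (fderiv ℝ (fun q => fderiv ℝ v q (1, 0)) (x, y) (0, 1)) y :=
    hasDerivAt_fix1 hd1vd x y
  have hg2 : HasDerivAt (fun t => gfn u v (x, t))
      (-((u (x, y) * fderiv ℝ u (x, y) (0, 1) * Real.sin (v (x, y)) +
        (u (x, y)) ^ 2 / 2 * (Real.cos (v (x, y)) * fderiv ℝ v (x, y) (0, 1))) *
          fderiv ℝ v (x, y) (1, 0) +
        wfn u v (x, y) * fderiv ℝ (fun q => fderiv ℝ v q (1, 0)) (x, y) (0, 1)) +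
        x * (-Real.sin y)) y :=
    ((hw2.mul hA2).neg).add ((Real.hasDerivAt_cos y).const_mul x)
  have eg : fderiv ℝ (gfn u v) (x, y) (0, 1) = _ :=
    (hasDerivAt_fix1 ((gfn_contDiff hu hv).differentiable (by simp)) x y).unique hg2
  -- symmetry of second derivatives
  have hS : fderiv ℝ (fun q => fderiv ℝ v q (0, 1)) (x, y) (1, 0) =
      fderiv ℝ (fun q => fderiv ℝ v q (1, 0)) (x, y) (0, 1) := by
    have h1 := fderiv_clm_apply (hfd2 (x, y)) (differentiableAt_const ((0:ℝ), (1:ℝ)))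
    have h2 := fderiv_clm_apply (hfd2 (x, y)) (differentiableAt_const ((1:ℝ), (0:ℝ)))
    rw [h1, h2]
    simp only [fderiv_const, fderiv_fun_const, Pi.zero_apply, ContinuousLinearMap.comp_zero, zero_add,
      ContinuousLinearMap.add_apply, ContinuousLinearMap.flip_apply,
      ContinuousLinearMap.zero_apply]
    exact second_derivative_symmetric (fun q => (hvd q).hasFDerivAt)
      ((hfd2 (x, y)).hasFDerivAt) _ _
  rw [ef, eg, hS]
  ring

private theorem key (L : ℝ) (hL : 0 < L)
    (hu : ContDiff ℝ (⊤ : ℕ∞) u) (hv : ContDiff ℝ (⊤ : ℕ∞) v)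
    (hperX : ∀ x, ∀ y ∈ Set.Icc (0:ℝ) π, u (x + L, y) = u (x, y) + L)
    (hperY : ∀ x, ∀ y ∈ Set.Icc (0:ℝ) π, v (x + L, y) = v (x, y))
    (hlow : ∀ x, v (x, 0) = 0) (hhigh : ∀ x, v (x, π) = π)
    (harea : ∀ x, ∀ y ∈ Set.Icc (0:ℝ) π,
      Real.sin (v (x, y)) * (fderiv ℝ u (x, y) (1, 0) * fderiv ℝ v (x, y) (0, 1)
        - fderiv ℝ u (x, y) (0, 1) * fderiv ℝ v (x, y) (1, 0)) = Real.sin y) :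
    (∫ x in (0:ℝ)..L, ∫ y in (0:ℝ)..π, (u (x, y) - x) * Real.sin y)
      = L * ∫ t in (0:ℝ)..π, u (0, t) * Real.sin (v (0, t)) * fderiv ℝ v (0, t) (0, 1) := by
  have hvd := hv.differentiable (by simp)
  -- Green's theorem
  have Hi : MeasureTheory.IntegrableOn
      (fun p => fderiv ℝ (ffn u v) p (1, 0) + fderiv ℝ (gfn u v) p (0, 1))
      (Set.uIcc 0 L ×ˢ Set.uIcc 0 π) := by
    have h1 : ContDiff ℝ (⊤ : ℕ∞) (fun p => fderiv ℝ (ffn u v) p (1, 0)) :=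
      ((ffn_contDiff hu hv).fderiv_right (by simp)).clm_apply contDiff_const
    have h2 : ContDiff ℝ (⊤ : ℕ∞) (fun p => fderiv ℝ (gfn u v) p (0, 1)) :=
      ((gfn_contDiff hu hv).fderiv_right (by simp)).clm_apply contDiff_const
    exact (h1.continuous.add h2.continuous).continuousOn.integrableOn_compact
      (isCompact_uIcc.prod isCompact_uIcc)
  have green := MeasureTheory.integral2_divergence_prod_of_hasFDerivAt_off_countable
    (ffn u v) (gfn u v) (fderiv ℝ (ffn u v)) (fderiv ℝ (gfn u v)) 0 0 L π ∅
    Set.countable_empty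
    ((ffn_contDiff hu hv).continuous).continuousOn
    ((gfn_contDiff hu hv).continuous).continuousOn
    (fun p _ => ((ffn_contDiff hu hv).differentiable (by simp) p).hasFDerivAt)
    (fun p _ => ((gfn_contDiff hu hv).differentiable (by simp) p).hasFDerivAt)
    Hi
  -- rewrite the divergence integrand
  have hLHS : (∫ x in (0:ℝ)..L, ∫ y in (0:ℝ)..π,
        fderiv ℝ (ffn u v) (x, y) (1, 0) + fderiv ℝ (gfn u v) (x, y) (0, 1))
      = ∫ x in (0:ℝ)..L, ∫ y in (0:ℝ)..π, (u (x, y) - x) * Real.sin y := by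
    refine intervalIntegral.integral_congr fun x _ => ?_
    refine intervalIntegral.integral_congr fun y hy => ?_
    rw [Set.uIcc_of_le Real.pi_pos.le] at hy
    rw [divergence_eq hu hv x y, harea x y hy]
    ring
  rw [hLHS] at green
  -- boundary terms on horizontal sides
  have hgtop : (∫ x in (0:ℝ)..L, gfn u v (x, π)) = -(L ^ 2 / 2) := by
    have h : ∀ x : ℝ, gfn u v (x, π) = -x := by
      intro x
      simp [gfn, wfn, hhigh x, Real.sin_pi, Real.cos_pi]
    rw [intervalIntegral.integral_congr (fun x _ => h x)]
    rw [intervalIntegral.integral_neg, integral_id]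
    norm_num
  have hgbot : (∫ x in (0:ℝ)..L, gfn u v (x, 0)) = L ^ 2 / 2 := by
    have h : ∀ x : ℝ, gfn u v (x, 0) = x := by
      intro x
      simp [gfn, wfn, hlow x, Real.sin_zero, Real.cos_zero]
    rw [intervalIntegral.integral_congr (fun x _ => h x)]
    rw [integral_id]
    norm_num
  -- the right vertical side
  have hA : (∫ y in (0:ℝ)..π, ffn u v (L, y))
      = ∫ y in (0:ℝ)..π, ((u (0, y) + L) ^ 2 / 2) *
          (Real.sin (v (0, y)) * fderiv ℝ v (0, y) (0, 1)) := by
    apply intervalIntegral.integral_congr_ae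
    filter_upwards [MeasureTheory.compl_mem_ae_iff.2 Real.volume_singleton] with y hy hmem
    rw [Set.uIoc_of_le Real.pi_pos.le] at hmem
    have hyIoo : y ∈ Set.Ioo (0:ℝ) π := ⟨hmem.1, lt_of_le_of_ne hmem.2 hy⟩
    have hyIcc := Set.Ioo_subset_Icc_self hyIoo
    have h1 : u (L, y) = u (0, y) + L := by simpa using hperX 0 y hyIcc
    have h2 : v (L, y) = v (0, y) := by simpa using hperY 0 y hyIcc
    have h3 : fderiv ℝ v (L, y) (0, 1) = fderiv ℝ v (0, y) (0, 1) := by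
      have e1 : deriv (fun t => v (L, t)) y = deriv (fun t => v (0, t)) y := by
        apply Filter.EventuallyEq.deriv_eq
        filter_upwards [Ioo_mem_nhds hyIoo.1 hyIoo.2] with t ht
        simpa using hperY 0 t (Set.Ioo_subset_Icc_self ht)
      rw [← (hasDerivAt_fix1 hvd L y).deriv, ← (hasDerivAt_fix1 hvd 0 y).deriv]
      exact e1
    simp only [ffn, wfn, h1, h2, h3]
    ring
  -- the left vertical side
  have hB : (∫ y in (0:ℝ)..π, ffn u v (0, y))
      = ∫ y in (0:ℝ)..π, ((u (0, y)) ^ 2 / 2) *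
          (Real.sin (v (0, y)) * fderiv ℝ v (0, y) (0, 1)) := by
    refine intervalIntegral.integral_congr fun y _ => ?_
    simp only [ffn, wfn]
    ring
  -- continuity facts
  have hcu : Continuous fun y : ℝ => u (0, y) :=
    hu.continuous.comp (continuous_const.prodMk continuous_id)
  have hcs : Continuous fun y : ℝ => Real.sin (v (0, y)) :=
    Real.continuous_sin.comp (hv.continuous.comp (continuous_const.prodMk continuous_id))
  have hcd : Continuous fun y : ℝ => fderiv ℝ v (0, y) (0, 1) :=
    ((d2v_contDiff hv).continuous).comp (continuous_const.prodMk continuous_id)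
  have hcr : Continuous fun y : ℝ =>
      Real.sin (v (0, y)) * fderiv ℝ v (0, y) (0, 1) := hcs.mul hcd
  -- ∫ sin(v(0,y)) dv = 2
  have hint_r : (∫ y in (0:ℝ)..π, Real.sin (v (0, y)) * fderiv ℝ v (0, y) (0, 1)) = 2 := by
    have hd : ∀ y ∈ Set.uIcc (0:ℝ) π, HasDerivAt (fun t => -Real.cos (v (0, t)))
        (Real.sin (v (0, y)) * fderiv ℝ v (0, y) (0, 1)) y := by
      intro y _
      have hvy := hasDerivAt_fix1 hvd 0 y
      have h := ((Real.hasDerivAt_cos (v (0, y))).comp y hvy).neg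
      exact h.congr_deriv (by ring)
    rw [intervalIntegral.integral_eq_sub_of_hasDerivAt hd (hcr.intervalIntegrable 0 π)]
    rw [hhigh 0, hlow 0]
    norm_num
  -- combine the two vertical sides
  have hi1 : IntervalIntegrable (fun y => ((u (0, y) + L) ^ 2 / 2) *
      (Real.sin (v (0, y)) * fderiv ℝ v (0, y) (0, 1))) MeasureTheory.volume 0 π :=
    ((((hcu.add continuous_const).pow 2).div_const 2).mul hcr).intervalIntegrable 0 π
  have hi2 : IntervalIntegrable (fun y => ((u (0, y)) ^ 2 / 2) *
      (Real.sin (v (0, y)) * fderiv ℝ v (0, y) (0, 1))) MeasureTheory.volume 0 π :=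
    (((hcu.pow 2).div_const 2).mul hcr).intervalIntegrable 0 π
  have hiA : IntervalIntegrable (fun y => L * (u (0, y) * Real.sin (v (0, y)) *
      fderiv ℝ v (0, y) (0, 1))) MeasureTheory.volume 0 π :=
    (continuous_const.mul ((hcu.mul hcs).mul hcd)).intervalIntegrable 0 π
  have hiB : IntervalIntegrable (fun y => (L ^ 2 / 2) * (Real.sin (v (0, y)) *
      fderiv ℝ v (0, y) (0, 1))) MeasureTheory.volume 0 π :=
    (continuous_const.mul hcr).intervalIntegrable 0 π
  have hsub : (∫ y in (0:ℝ)..π, ((u (0, y) + L) ^ 2 / 2) *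
          (Real.sin (v (0, y)) * fderiv ℝ v (0, y) (0, 1)))
      - (∫ y in (0:ℝ)..π, ((u (0, y)) ^ 2 / 2) *
          (Real.sin (v (0, y)) * fderiv ℝ v (0, y) (0, 1)))
      = L * (∫ t in (0:ℝ)..π, u (0, t) * Real.sin (v (0, t)) * fderiv ℝ v (0, t) (0, 1))
        + L ^ 2 / 2 *
          (∫ y in (0:ℝ)..π, Real.sin (v (0, y)) * fderiv ℝ v (0, y) (0, 1)) := by
    have e1 : (∫ y in (0:ℝ)..π, ((u (0, y) + L) ^ 2 / 2) *
            (Real.sin (v (0, y)) * fderiv ℝ v (0, y) (0, 1)))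
        - (∫ y in (0:ℝ)..π, ((u (0, y)) ^ 2 / 2) *
            (Real.sin (v (0, y)) * fderiv ℝ v (0, y) (0, 1)))
        = ∫ y in (0:ℝ)..π, (L * (u (0, y) * Real.sin (v (0, y)) * fderiv ℝ v (0, y) (0, 1))
            + (L ^ 2 / 2) * (Real.sin (v (0, y)) * fderiv ℝ v (0, y) (0, 1))) := by
      rw [← intervalIntegral.integral_sub hi1 hi2]
      refine intervalIntegral.integral_congr fun y _ => ?_
      ring
    rw [e1, intervalIntegral.integral_add hiA hiB,
      intervalIntegral.integral_const_mul, intervalIntegral.integral_const_mul]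
  rw [hgtop, hgbot, hA, hB] at green
  rw [hint_r] at hsub
  rw [green]
  linarith [hsub]

set_option maxHeartbeats 2000000 in
/-- Proposition 1.2: `FLUX(Φ) = (1/2) ∫_{Φ∘α₀} x sin y dy`, where `α₀(t) = (0,t)`.
The curve `Φ∘α₀` is `t ↦ (X(0,t), Y(0,t))`, so the line integral is
`∫₀^π X(0,t) sin(Y(0,t)) (d/dt Y(0,t)) dt`. -/
theorem flux_eq_line_integral (L : ℝ) (hL : 0 < L) (Φ : StripMap L) :
    flux L Φ =
      (1 / 2) * ∫ t in (0:ℝ)..π,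
        Φ.X 0 t * Real.sin (Φ.Y 0 t) * deriv (fun s => Φ.Y 0 s) t := by
  have hu : ContDiff ℝ (⊤ : ℕ∞) (fun p : ℝ × ℝ => Φ.X p.1 p.2) := contDiff_fst.comp Φ.smooth
  have hv : ContDiff ℝ (⊤ : ℕ∞) (fun p : ℝ × ℝ => Φ.Y p.1 p.2) := contDiff_snd.comp Φ.smooth
  have hud := hu.differentiable (by simp)
  have hvd := hv.differentiable (by simp)
  have harea : ∀ x, ∀ y ∈ Set.Icc (0:ℝ) π,
      Real.sin ((fun p : ℝ × ℝ => Φ.Y p.1 p.2) (x, y)) *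
        (fderiv ℝ (fun p : ℝ × ℝ => Φ.X p.1 p.2) (x, y) (1, 0) *
            fderiv ℝ (fun p : ℝ × ℝ => Φ.Y p.1 p.2) (x, y) (0, 1) -
          fderiv ℝ (fun p : ℝ × ℝ => Φ.X p.1 p.2) (x, y) (0, 1) *
            fderiv ℝ (fun p : ℝ × ℝ => Φ.Y p.1 p.2) (x, y) (1, 0)) = Real.sin y := by
    intro x y hy
    have e1 : fderiv ℝ (fun p : ℝ × ℝ => Φ.X p.1 p.2) (x, y) (1, 0) = pd1 Φ.X x y :=
      ((hasDerivAt_fix2 hud x y).deriv).symm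
    have e2 : fderiv ℝ (fun p : ℝ × ℝ => Φ.Y p.1 p.2) (x, y) (0, 1) = pd2 Φ.Y x y :=
      ((hasDerivAt_fix1 hvd x y).deriv).symm
    have e3 : fderiv ℝ (fun p : ℝ × ℝ => Φ.X p.1 p.2) (x, y) (0, 1) = pd2 Φ.X x y :=
      ((hasDerivAt_fix1 hud x y).deriv).symm
    have e4 : fderiv ℝ (fun p : ℝ × ℝ => Φ.Y p.1 p.2) (x, y) (1, 0) = pd1 Φ.Y x y :=
      ((hasDerivAt_fix2 hvd x y).deriv).symm
    rw [e1, e2, e3, e4]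
    exact Φ.areaPres x y hy
  have hkey := key L hL hu hv (fun x y hy => Φ.periodicX x y hy)
    (fun x y hy => Φ.periodicY x y hy) (fun x => Φ.bdryLow x) (fun x => Φ.bdryHigh x) harea
  have hderiv : ∀ t : ℝ, deriv (fun s => Φ.Y 0 s) t
      = fderiv ℝ (fun p : ℝ × ℝ => Φ.Y p.1 p.2) (0, t) (0, 1) :=
    fun t => (hasDerivAt_fix1 hvd 0 t).deriv
  unfold flux
  rw [hkey]
  simp only [hderiv]
  have hL' : L ≠ 0 := ne_of_gt hL
  field_simp
end
end

section
/- Let Φ ∈ 𝒟_L(S,ω) and let σ : S → ℝ be its action, i.e. the unique smooth function with dσ = Φ*λ − λ (where λ = cos y dx) and σ(0,0) = ∫_{γ₀} λ − FLUX(Φ) for a path γ₀ in ∂S from (0,0) to Φ(0,0). Then σ is L-periodic in the first variable: σ(x+L, y) = σ(x,y) for all (x,y) ∈ S. -/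
open Real intervalIntegral

noncomputable section

/-- The action of `Φ ∈ 𝒟_L(S,ω)`: the unique smooth function `σ : S → ℝ` with
`dσ = Φ*λ − λ` (where `λ = cos y dx`, so `Φ*λ − λ = cos Y dX − cos y dx`), normalized by
`σ(0,0) = ∫_{γ₀} λ − FLUX(Φ)`, where `γ₀` is a path in the lower boundary `ℝ × {0}` from
`(0,0)` to `Φ(0,0)`; along this boundary `λ = dx`, so the integral equals `X(0,0) − 0`. -/
def IsAction (L : ℝ) (Φ : StripMap L) (σ : ℝ → ℝ → ℝ) : Prop :=
  ContDiff ℝ (⊤ : ℕ∞) (fun p : ℝ × ℝ => σ p.1 p.2) ∧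
  (∀ (x : ℝ), ∀ y ∈ Set.Icc (0:ℝ) π,
    pd1 σ x y = Real.cos (Φ.Y x y) * pd1 Φ.X x y - Real.cos y ∧
    pd2 σ x y = Real.cos (Φ.Y x y) * pd2 Φ.X x y) ∧
  σ 0 0 = (Φ.X 0 0 - 0) - flux L Φ

/-- The action `σ` of `Φ ∈ 𝒟_L(S,ω)` is `L`-periodic in the first variable. -/
theorem action_periodic (L : ℝ) (hL : 0 < L) (Φ : StripMap L) (σ : ℝ → ℝ → ℝ)
    (hσ : IsAction L Φ σ) :
    ∀ (x : ℝ), ∀ y ∈ Set.Icc (0:ℝ) π, σ (x + L) y = σ x y := by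
  obtain ⟨hsm, hd, -⟩ := hσ
  have hσdiff : Differentiable ℝ (fun p : ℝ × ℝ => σ p.1 p.2) := hsm.differentiable (by simp)
  have hXdiff : Differentiable ℝ (fun p : ℝ × ℝ => Φ.X p.1 p.2) := by
    have := (Φ.smooth.differentiable (by simp))
    exact fun p => ((this p).fst :)
  -- slices are differentiable
  have hσ1 : ∀ y, Differentiable ℝ (fun t => σ t y) := fun y =>
    hσdiff.comp (differentiable_id.prodMk (differentiable_const y))
  have hσ2 : ∀ x, Differentiable ℝ (fun t => σ x t) := fun x =>
    hσdiff.comp ((differentiable_const x).prodMk differentiable_id)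
  have hX1 : ∀ y, Differentiable ℝ (fun t => Φ.X t y) := fun y =>
    hXdiff.comp (differentiable_id.prodMk (differentiable_const y))
  have hX2 : ∀ x, Differentiable ℝ (fun t => Φ.X x t) := fun x =>
    hXdiff.comp ((differentiable_const x).prodMk differentiable_id)
  have h0π : (0:ℝ) ∈ Set.Icc (0:ℝ) π := ⟨le_refl 0, Real.pi_pos.le⟩
  -- Step 1: periodicity on the lower boundary
  have step1 : ∀ x : ℝ, σ (x + L) 0 = σ x 0 := by
    intro x
    set F : ℝ → ℝ := fun t => σ t 0 - Φ.X t 0 + t with hF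
    have hFdiff : Differentiable ℝ F := ((hσ1 0).sub (hX1 0)).add differentiable_id
    have hFderiv : ∀ t, deriv F t = 0 := by
      intro t
      have h1 : HasDerivAt (fun t => σ t 0) (pd1 σ t 0) t := ((hσ1 0) t).hasDerivAt
      have h2 : HasDerivAt (fun t => Φ.X t 0) (pd1 Φ.X t 0) t := ((hX1 0) t).hasDerivAt
      have h3 : HasDerivAt F (pd1 σ t 0 - pd1 Φ.X t 0 + 1) t :=
        (h1.sub h2).add (hasDerivAt_id t)
      rw [h3.deriv]
      have := (hd t 0 h0π).1
      rw [Φ.bdryLow t, Real.cos_zero, one_mul] at this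
      rw [this]; ring
    have hconst := is_const_of_deriv_eq_zero hFdiff hFderiv (x + L) x
    have hXper := Φ.periodicX x 0 h0π
    simp only [hF] at hconst
    rw [hXper] at hconst
    linarith
  -- Step 2: fix x, propagate in y
  intro x y hy
  set H : ℝ → ℝ := fun t => σ (x + L) t - σ x t with hH
  have hHdiff : Differentiable ℝ H := (hσ2 (x + L)).sub (hσ2 x)
  have hHderiv : ∀ t ∈ Set.Ioo (0:ℝ) π, deriv H t = 0 := by
    intro t ht
    have htI : t ∈ Set.Icc (0:ℝ) π := Set.mem_Icc_of_Ioo ht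
    have h1 : HasDerivAt (fun s => σ (x + L) s) (pd2 σ (x + L) t) t :=
      ((hσ2 (x + L)) t).hasDerivAt
    have h2 : HasDerivAt (fun s => σ x s) (pd2 σ x t) t := ((hσ2 x) t).hasDerivAt
    have h3 : HasDerivAt H (pd2 σ (x + L) t - pd2 σ x t) t := h1.sub h2
    rw [h3.deriv]
    have e1 := (hd (x + L) t htI).2
    have e2 := (hd x t htI).2
    -- pd2 X (x+L) t = pd2 X x t
    have hnb : Set.Ioo (0:ℝ) π ∈ nhds t := isOpen_Ioo.mem_nhds ht
    have heq : (fun s => Φ.X (x + L) s) =ᶠ[nhds t] (fun s => Φ.X x s + L) := by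
      filter_upwards [hnb] with s hs
      exact Φ.periodicX x s (Set.mem_Icc_of_Ioo hs)
    have hpd2X : pd2 Φ.X (x + L) t = pd2 Φ.X x t := by
      have := heq.deriv_eq
      simpa [pd2] using this
    have hYper := Φ.periodicY x t htI
    rw [e1, e2, hYper, hpd2X]
    ring
  -- H is constant on Ioo 0 π
  have hconstIoo : ∀ t ∈ Set.Ioo (0:ℝ) π, H t = H (π / 2) := by
    intro t ht
    have hmid : (π / 2) ∈ Set.Ioo (0:ℝ) π := by
      constructor <;> [positivity; linarith [Real.pi_pos]]
    refine (convex_Ioo (0:ℝ) π).is_const_of_fderivWithin_eq_zero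
      (hHdiff.differentiableOn) ?_ ht hmid
    intro z hz
    rw [fderivWithin_of_isOpen isOpen_Ioo hz]
    have hz0 := hHderiv z hz
    have := (hHdiff z).hasDerivAt
    rw [hz0] at this
    rw [this.hasFDerivAt.fderiv]
    ext; simp
  -- extend to the closed interval by continuity
  have hclosure : ∀ t ∈ Set.Icc (0:ℝ) π, H t = H (π / 2) := by
    have hIcc : Set.Icc (0:ℝ) π = closure (Set.Ioo (0:ℝ) π) := by
      rw [closure_Ioo (ne_of_lt Real.pi_pos)]
    rw [hIcc]
    exact Set.EqOn.closure (fun t ht => hconstIoo t ht) hHdiff.continuous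
      continuous_const
  have hH0 : H 0 = 0 := by simp only [hH]; rw [step1 x]; ring
  have := hclosure y hy
  have h0 := hclosure 0 h0π
  have : H y = 0 := by rw [this, ← h0, hH0]
  simpa [hH, sub_eq_zero] using this
end
end

section
/- Let Φ ∈ 𝒟_L(S,ω) with action σ. For every x ∈ ℝ, if δ_x is a smooth path in the upper boundary component ℝ × {π} of S going from (x,π) to Φ(x,π), then σ(x,π) = ∫_{δ_x} λ + FLUX(Φ). (In particular the boundary normalizations on the two components of ∂S differ by 2·FLUX(Φ).) -/
open Real intervalIntegral

noncomputable section

section Toolbox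

variable {f : ℝ → ℝ → ℝ}

private lemma key1 (hf : ContDiff ℝ (⊤ : ℕ∞) fun p : ℝ × ℝ => f p.1 p.2) (x y : ℝ) :
    HasDerivAt (fun t => f t y) (fderiv ℝ (fun p : ℝ × ℝ => f p.1 p.2) (x, y) (1, 0)) x := by
  have h := ((hf.differentiable (by simp)) (x, y)).hasFDerivAt
  have h2 : HasDerivAt (fun t : ℝ => (t, y)) ((1:ℝ), (0:ℝ)) x :=
    (hasDerivAt_id x).prodMk (hasDerivAt_const x y)
  exact h.comp_hasDerivAt x h2

private lemma key2 (hf : ContDiff ℝ (⊤ : ℕ∞) fun p : ℝ × ℝ => f p.1 p.2) (x y : ℝ) :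
    HasDerivAt (fun t => f x t) (fderiv ℝ (fun p : ℝ × ℝ => f p.1 p.2) (x, y) (0, 1)) y := by
  have h := ((hf.differentiable (by simp)) (x, y)).hasFDerivAt
  have h2 : HasDerivAt (fun t : ℝ => (x, t)) ((0:ℝ), (1:ℝ)) y :=
    (hasDerivAt_const y x).prodMk (hasDerivAt_id y)
  exact h.comp_hasDerivAt y h2

lemma pd1_eq (hf : ContDiff ℝ (⊤ : ℕ∞) fun p : ℝ × ℝ => f p.1 p.2) (x y : ℝ) :
    pd1 f x y = fderiv ℝ (fun p : ℝ × ℝ => f p.1 p.2) (x, y) (1, 0) := (key1 hf x y).deriv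

lemma pd2_eq (hf : ContDiff ℝ (⊤ : ℕ∞) fun p : ℝ × ℝ => f p.1 p.2) (x y : ℝ) :
    pd2 f x y = fderiv ℝ (fun p : ℝ × ℝ => f p.1 p.2) (x, y) (0, 1) := (key2 hf x y).deriv

lemma hasDerivAt_pd1 (hf : ContDiff ℝ (⊤ : ℕ∞) fun p : ℝ × ℝ => f p.1 p.2) (x y : ℝ) :
    HasDerivAt (fun t => f t y) (pd1 f x y) x := by
  rw [pd1_eq hf]; exact key1 hf x y

lemma hasDerivAt_pd2 (hf : ContDiff ℝ (⊤ : ℕ∞) fun p : ℝ × ℝ => f p.1 p.2) (x y : ℝ) :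
    HasDerivAt (fun t => f x t) (pd2 f x y) y := by
  rw [pd2_eq hf]; exact key2 hf x y

lemma contDiff_pd1 (hf : ContDiff ℝ (⊤ : ℕ∞) fun p : ℝ × ℝ => f p.1 p.2) :
    ContDiff ℝ (⊤ : ℕ∞) fun p : ℝ × ℝ => pd1 f p.1 p.2 := by
  have h2 : ContDiff ℝ (⊤ : ℕ∞) (fderiv ℝ fun p : ℝ × ℝ => f p.1 p.2) := hf.fderiv_right (by simp)
  have h3 := (ContinuousLinearMap.apply ℝ ℝ (((1:ℝ), (0:ℝ)))).contDiff.comp h2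
  have : (fun p : ℝ × ℝ => pd1 f p.1 p.2)
      = fun p : ℝ × ℝ => fderiv ℝ (fun p : ℝ × ℝ => f p.1 p.2) p (1, 0) := by
    funext p; exact pd1_eq hf p.1 p.2
  rw [this]; exact h3

lemma contDiff_pd2 (hf : ContDiff ℝ (⊤ : ℕ∞) fun p : ℝ × ℝ => f p.1 p.2) :
    ContDiff ℝ (⊤ : ℕ∞) fun p : ℝ × ℝ => pd2 f p.1 p.2 := by
  have h2 : ContDiff ℝ (⊤ : ℕ∞) (fderiv ℝ fun p : ℝ × ℝ => f p.1 p.2) := hf.fderiv_right (by simp)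
  have h3 := (ContinuousLinearMap.apply ℝ ℝ (((0:ℝ), (1:ℝ)))).contDiff.comp h2
  have : (fun p : ℝ × ℝ => pd2 f p.1 p.2)
      = fun p : ℝ × ℝ => fderiv ℝ (fun p : ℝ × ℝ => f p.1 p.2) p (0, 1) := by
    funext p; exact pd2_eq hf p.1 p.2
  rw [this]; exact h3

lemma pd_symm (hf : ContDiff ℝ (⊤ : ℕ∞) fun p : ℝ × ℝ => f p.1 p.2) (x y : ℝ) :
    pd1 (fun a b => pd2 f a b) x y = pd2 (fun a b => pd1 f a b) x y := by
  set F : ℝ × ℝ → ℝ := fun p => f p.1 p.2 with hF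
  have hG : ContDiff ℝ (⊤ : ℕ∞) (fderiv ℝ F) := hf.fderiv_right (by simp)
  have hGd : Differentiable ℝ (fderiv ℝ F) := hG.differentiable (by simp)
  have base1 : HasDerivAt (fun t => fderiv ℝ F (t, y)) (fderiv ℝ (fderiv ℝ F) (x, y) (1, 0)) x := by
    exact (hGd (x, y)).hasFDerivAt.comp_hasDerivAt x
      ((hasDerivAt_id x).prodMk (hasDerivAt_const x y))
  have base2 : HasDerivAt (fun t => fderiv ℝ F (x, t)) (fderiv ℝ (fderiv ℝ F) (x, y) (0, 1)) y := by
    exact (hGd (x, y)).hasFDerivAt.comp_hasDerivAt y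
      ((hasDerivAt_const y x).prodMk (hasDerivAt_id y))
  have h1 : pd1 (fun a b => pd2 f a b) x y = fderiv ℝ (fderiv ℝ F) (x, y) (1, 0) (0, 1) := by
    have e : (fun t => pd2 f t y) = fun t => fderiv ℝ F (t, y) (0, 1) :=
      funext fun t => pd2_eq hf t y
    show deriv (fun t => pd2 f t y) x = _
    rw [e]
    have := base1.clm_apply (hasDerivAt_const x (((0:ℝ), (1:ℝ))))
    simpa using this.deriv
  have h2 : pd2 (fun a b => pd1 f a b) x y = fderiv ℝ (fderiv ℝ F) (x, y) (0, 1) (1, 0) := by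
    have e : (fun t => pd1 f x t) = fun t => fderiv ℝ F (x, t) (1, 0) :=
      funext fun t => pd1_eq hf x t
    show deriv (fun t => pd1 f x t) y = _
    rw [e]
    have := base2.clm_apply (hasDerivAt_const y (((1:ℝ), (0:ℝ))))
    simpa using this.deriv
  rw [h1, h2]
  exact second_derivative_symmetric (f := F) (fun p => ((hf.differentiable (by simp)) p).hasFDerivAt)
    (hGd (x, y)).hasFDerivAt _ _

lemma contRight {g : ℝ → ℝ → ℝ} (hg : ContDiff ℝ (⊤ : ℕ∞) fun p : ℝ × ℝ => g p.1 p.2) (a : ℝ) :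
    Continuous fun b => g a b :=
  hg.continuous.comp (continuous_const.prodMk continuous_id)

lemma contLeft {g : ℝ → ℝ → ℝ} (hg : ContDiff ℝ (⊤ : ℕ∞) fun p : ℝ × ℝ => g p.1 p.2) (b : ℝ) :
    Continuous fun a => g a b :=
  hg.continuous.comp (continuous_id.prodMk continuous_const)

lemma integral_pd2 (hf : ContDiff ℝ (⊤ : ℕ∞) fun p : ℝ × ℝ => f p.1 p.2) (x a b : ℝ) :
    ∫ y in a..b, pd2 f x y = f x b - f x a :=
  integral_eq_sub_of_hasDerivAt (fun y _ => hasDerivAt_pd2 hf x y)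
    ((contRight (contDiff_pd2 hf) x).intervalIntegrable a b)

lemma integral_pd1 (hf : ContDiff ℝ (⊤ : ℕ∞) fun p : ℝ × ℝ => f p.1 p.2) (y a b : ℝ) :
    ∫ t in a..b, pd1 f t y = f b y - f a y :=
  integral_eq_sub_of_hasDerivAt (fun t _ => hasDerivAt_pd1 hf t y)
    ((contLeft (contDiff_pd1 hf) y).intervalIntegrable a b)

lemma my_swap (f : ℝ → ℝ → ℝ) (hf : Continuous fun p : ℝ × ℝ => f p.1 p.2)
    {a b c d : ℝ} (hab : a ≤ b) (hcd : c ≤ d) :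
    ∫ x in a..b, ∫ y in c..d, f x y = ∫ y in c..d, ∫ x in a..b, f x y := by
  rw [intervalIntegral.integral_of_le hab, intervalIntegral.integral_of_le hcd]
  simp_rw [intervalIntegral.integral_of_le hab, intervalIntegral.integral_of_le hcd]
  have hint : MeasureTheory.Integrable (Function.uncurry f)
      ((MeasureTheory.volume.restrict (Set.Ioc a b)).prod
        (MeasureTheory.volume.restrict (Set.Ioc c d))) := by
    rw [MeasureTheory.Measure.prod_restrict, ← MeasureTheory.Measure.volume_eq_prod]
    have h1 : MeasureTheory.IntegrableOn (Function.uncurry f)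
        (Set.Icc a b ×ˢ Set.Icc c d) MeasureTheory.volume :=
      (hf.continuousOn).integrableOn_compact (isCompact_Icc.prod isCompact_Icc)
    exact h1.mono_set (Set.prod_mono Set.Ioc_subset_Icc_self Set.Ioc_subset_Icc_self)
  exact MeasureTheory.integral_integral_swap hint

end Toolbox

namespace StripAux

variable {L : ℝ} (Φ : StripMap L)

def hf : ℝ → ℝ → ℝ := fun a b => Φ.X a b - a
def Cf : ℝ → ℝ → ℝ := fun a b => -Real.cos (Φ.Y a b)
def uf : ℝ → ℝ → ℝ := fun a b => hf Φ a b * hf Φ a b / 2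
def Zf : ℝ → ℝ → ℝ := fun a b => Φ.X a b * Real.cos (Φ.Y a b)
def Pf : ℝ → ℝ → ℝ := fun a b => uf Φ a b * pd2 (Cf Φ) a b
def Qf : ℝ → ℝ → ℝ := fun a b => uf Φ a b * pd1 (Cf Φ) a b
def Rf : ℝ → ℝ → ℝ := fun a b => hf Φ a b * pd2 (Cf Φ) a b

lemma hXs : ContDiff ℝ (⊤ : ℕ∞) fun p : ℝ × ℝ => Φ.X p.1 p.2 := contDiff_fst.comp Φ.smooth
lemma hYs : ContDiff ℝ (⊤ : ℕ∞) fun p : ℝ × ℝ => Φ.Y p.1 p.2 := contDiff_snd.comp Φ.smooth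
lemma hhs : ContDiff ℝ (⊤ : ℕ∞) fun p : ℝ × ℝ => hf Φ p.1 p.2 := (hXs Φ).sub contDiff_fst
lemma hCs : ContDiff ℝ (⊤ : ℕ∞) fun p : ℝ × ℝ => Cf Φ p.1 p.2 := ((hYs Φ).cos).neg
lemma hus : ContDiff ℝ (⊤ : ℕ∞) fun p : ℝ × ℝ => uf Φ p.1 p.2 := ((hhs Φ).mul (hhs Φ)).div_const 2
lemma hZs : ContDiff ℝ (⊤ : ℕ∞) fun p : ℝ × ℝ => Zf Φ p.1 p.2 := (hXs Φ).mul ((hYs Φ).cos)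
lemma hPs : ContDiff ℝ (⊤ : ℕ∞) fun p : ℝ × ℝ => Pf Φ p.1 p.2 := (hus Φ).mul (contDiff_pd2 (hCs Φ))
lemma hQs : ContDiff ℝ (⊤ : ℕ∞) fun p : ℝ × ℝ => Qf Φ p.1 p.2 := (hus Φ).mul (contDiff_pd1 (hCs Φ))
lemma hRs : ContDiff ℝ (⊤ : ℕ∞) fun p : ℝ × ℝ => Rf Φ p.1 p.2 := (hhs Φ).mul (contDiff_pd2 (hCs Φ))

lemma pd1_hf (a b : ℝ) : pd1 (hf Φ) a b = pd1 Φ.X a b - 1 := by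
  have h := (hasDerivAt_pd1 (hXs Φ) a b).sub (hasDerivAt_id a)
  show deriv ((fun t => Φ.X t b) - id) a = _
  exact h.deriv

lemma pd2_hf (a b : ℝ) : pd2 (hf Φ) a b = pd2 Φ.X a b := by
  have h := (hasDerivAt_pd2 (hXs Φ) a b).sub (hasDerivAt_const b a)
  show deriv ((fun t => Φ.X a t) - fun x => a) b = _
  rw [h.deriv, sub_zero]

lemma pd1_Cf (a b : ℝ) : pd1 (Cf Φ) a b = Real.sin (Φ.Y a b) * pd1 Φ.Y a b := by
  have h := ((hasDerivAt_pd1 (hYs Φ) a b).cos).neg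
  show deriv (-fun x => Real.cos (Φ.Y x b)) a = _
  rw [h.deriv]; ring

lemma pd2_Cf (a b : ℝ) : pd2 (Cf Φ) a b = Real.sin (Φ.Y a b) * pd2 Φ.Y a b := by
  have h := ((hasDerivAt_pd2 (hYs Φ) a b).cos).neg
  show deriv (-fun x => Real.cos (Φ.Y a x)) b = _
  rw [h.deriv]; ring

lemma pd1_uf (a b : ℝ) : pd1 (uf Φ) a b = hf Φ a b * (pd1 Φ.X a b - 1) := by
  have h := ((hasDerivAt_pd1 (hhs Φ) a b).mul (hasDerivAt_pd1 (hhs Φ) a b)).div_const 2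
  show deriv (fun x => ((fun t => hf Φ t b) * fun t => hf Φ t b) x / 2) a = _
  rw [h.deriv, pd1_hf]; ring

lemma pd2_uf (a b : ℝ) : pd2 (uf Φ) a b = hf Φ a b * pd2 Φ.X a b := by
  have h := ((hasDerivAt_pd2 (hhs Φ) a b).mul (hasDerivAt_pd2 (hhs Φ) a b)).div_const 2
  show deriv (fun x => ((fun t => hf Φ a t) * fun t => hf Φ a t) x / 2) b = _
  rw [h.deriv, pd2_hf]; ring

lemma pd2_Zf (a b : ℝ) :
    pd2 (Zf Φ) a b = Real.cos (Φ.Y a b) * pd2 Φ.X a b - Φ.X a b * pd2 (Cf Φ) a b := by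
  have h := (hasDerivAt_pd2 (hXs Φ) a b).mul ((hasDerivAt_pd2 (hYs Φ) a b).cos)
  show deriv ((fun t => Φ.X a t) * fun x => Real.cos (Φ.Y a x)) b = _
  rw [h.deriv, pd2_Cf]; ring

lemma area' (a : ℝ) {b : ℝ} (hb : b ∈ Set.Icc (0:ℝ) π) :
    pd1 Φ.X a b * pd2 (Cf Φ) a b - pd2 Φ.X a b * pd1 (Cf Φ) a b = Real.sin b := by
  rw [pd1_Cf, pd2_Cf]
  linear_combination Φ.areaPres a b hb

lemma pd1_Pf (a b : ℝ) :
    pd1 (Pf Φ) a b = hf Φ a b * (pd1 Φ.X a b - 1) * pd2 (Cf Φ) a b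
      + uf Φ a b * pd1 (fun a' b' => pd2 (Cf Φ) a' b') a b := by
  have h := (hasDerivAt_pd1 (hus Φ) a b).mul
    (hasDerivAt_pd1 (contDiff_pd2 (hCs Φ)) a b)
  show deriv ((fun t => uf Φ t b) * fun t => pd2 (Cf Φ) t b) a = _
  rw [h.deriv, pd1_uf]

lemma pd2_Qf (a b : ℝ) :
    pd2 (Qf Φ) a b = hf Φ a b * pd2 Φ.X a b * pd1 (Cf Φ) a b
      + uf Φ a b * pd1 (fun a' b' => pd2 (Cf Φ) a' b') a b := by
  have h := (hasDerivAt_pd2 (hus Φ) a b).mul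
    (hasDerivAt_pd2 (contDiff_pd1 (hCs Φ)) a b)
  show deriv ((fun t => uf Φ a t) * fun t => pd1 (Cf Φ) a t) b = _
  rw [h.deriv, pd2_uf, pd_symm (hCs Φ)]

lemma star (a : ℝ) {b : ℝ} (hb : b ∈ Set.Icc (0:ℝ) π) :
    hf Φ a b * Real.sin b
      = pd1 (Pf Φ) a b - pd2 (Qf Φ) a b + hf Φ a b * pd2 (Cf Φ) a b := by
  rw [pd1_Pf, pd2_Qf]
  linear_combination (-hf Φ a b) * (area' Φ a hb)

end StripAux


open StripAux

/-- Proposition 1.5: for the action `σ` of `Φ ∈ 𝒟_L(S,ω)`, if `δₓ` is a smooth path in the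
upper boundary component `ℝ × {π}` from `(x,π)` to `Φ(x,π)` (we record it by its first
coordinate `δ : [0,1] → ℝ`, with `δ(0) = x`, `δ(1) = X(x,π)`), then
`σ(x,π) = ∫_{δₓ} λ + FLUX(Φ)`, where `∫_{δₓ} λ = ∫₀¹ cos(π) δ'(t) dt`. -/
theorem action_upper_boundary (L : ℝ) (hL : 0 < L) (Φ : StripMap L) (σ : ℝ → ℝ → ℝ)
    (hσ : IsAction L Φ σ) (x : ℝ) (δ : ℝ → ℝ) (hδ : ContDiff ℝ (⊤ : ℕ∞) δ)
    (hδ0 : δ 0 = x) (hδ1 : δ 1 = Φ.X x π) :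
    σ x π = (∫ t in (0:ℝ)..1, Real.cos π * deriv δ t) + flux L Φ := by
  obtain ⟨hσs, hσd, hσ0⟩ := hσ
  have hpi : (0:ℝ) ≤ π := pi_nonneg
  have hIπ : π ∈ Set.Icc (0:ℝ) π := ⟨hpi, le_refl π⟩
  have hI0 : (0:ℝ) ∈ Set.Icc (0:ℝ) π := ⟨le_refl 0, hpi⟩
  -- Step 1 : along the upper boundary, σ a π + (X a π - a) is constant
  have step1 : ∀ a : ℝ, σ a π + (Φ.X a π - a) = σ 0 π + Φ.X 0 π := by
    intro a
    have h1 : ∫ t in (0:ℝ)..a, pd1 σ t π = σ a π - σ 0 π := integral_pd1 hσs π 0 a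
    have h2 : ∫ t in (0:ℝ)..a, pd1 σ t π = ∫ t in (0:ℝ)..a, (1 - pd1 Φ.X t π) := by
      apply intervalIntegral.integral_congr
      intro t _
      beta_reduce
      rw [(hσd t π hIπ).1, Φ.bdryHigh, Real.cos_pi]
      ring
    have h3 : ∫ t in (0:ℝ)..a, (1 - pd1 Φ.X t π)
        = (a - 0) • (1:ℝ) - (Φ.X a π - Φ.X 0 π) := by
      rw [intervalIntegral.integral_sub intervalIntegrable_const
          ((contLeft (contDiff_pd1 (hXs Φ)) π).intervalIntegrable 0 a),
        intervalIntegral.integral_const, integral_pd1 (hXs Φ) π 0 a]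
    rw [h2, h3] at h1
    simp only [smul_eq_mul, mul_one] at h1
    linarith
  -- Step 2 : along the lower boundary
  have step2 : ∀ a : ℝ, σ a 0 = (Φ.X a 0 - a) - flux L Φ := by
    intro a
    have h1 : ∫ t in (0:ℝ)..a, pd1 σ t 0 = σ a 0 - σ 0 0 := integral_pd1 hσs 0 0 a
    have h2 : ∫ t in (0:ℝ)..a, pd1 σ t 0 = ∫ t in (0:ℝ)..a, (pd1 Φ.X t 0 - 1) := by
      apply intervalIntegral.integral_congr
      intro t _
      beta_reduce
      rw [(hσd t 0 hI0).1, Φ.bdryLow, Real.cos_zero]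
      ring
    have h3 : ∫ t in (0:ℝ)..a, (pd1 Φ.X t 0 - 1)
        = (Φ.X a 0 - Φ.X 0 0) - (a - 0) • (1:ℝ) := by
      rw [intervalIntegral.integral_sub
          ((contLeft (contDiff_pd1 (hXs Φ)) 0).intervalIntegrable 0 a)
          intervalIntegrable_const,
        intervalIntegral.integral_const, integral_pd1 (hXs Φ) 0 0 a]
    rw [h2, h3] at h1
    simp only [smul_eq_mul, mul_one] at h1
    linarith
  -- integrability facts
  have hCint : ∀ a : ℝ, IntervalIntegrable (fun b => pd2 (Cf Φ) a b)
      MeasureTheory.volume 0 π :=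
    fun a => (contRight (contDiff_pd2 (hCs Φ)) a).intervalIntegrable 0 π
  have hRint : ∀ a : ℝ, IntervalIntegrable (fun b => Rf Φ a b) MeasureTheory.volume 0 π :=
    fun a => (contRight (hRs Φ) a).intervalIntegrable 0 π
  have hZint : ∀ a : ℝ, IntervalIntegrable (fun b => pd2 (Zf Φ) a b)
      MeasureTheory.volume 0 π :=
    fun a => (contRight (contDiff_pd2 (hZs Φ)) a).intervalIntegrable 0 π
  have hPint : ∀ a : ℝ, IntervalIntegrable (fun b => pd1 (Pf Φ) a b)
      MeasureTheory.volume 0 π :=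
    fun a => (contRight (contDiff_pd1 (hPs Φ)) a).intervalIntegrable 0 π
  have hQint : ∀ a : ℝ, IntervalIntegrable (fun b => pd2 (Qf Φ) a b)
      MeasureTheory.volume 0 π :=
    fun a => (contRight (contDiff_pd2 (hQs Φ)) a).intervalIntegrable 0 π
  -- Step 6 : the inner integral of Rf is the constant K + flux
  have step6 : ∀ a : ℝ, (∫ b in (0:ℝ)..π, Rf Φ a b)
      = (σ 0 π + Φ.X 0 π) + flux L Φ := by
    intro a
    have c1 : ∫ b in (0:ℝ)..π, pd2 σ a b = σ a π - σ a 0 := integral_pd2 hσs a 0 π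
    have c2 : ∫ b in (0:ℝ)..π, pd2 σ a b
        = ∫ b in (0:ℝ)..π, (pd2 (Zf Φ) a b + (Rf Φ a b + a * pd2 (Cf Φ) a b)) := by
      apply intervalIntegral.integral_congr
      intro b hb
      rw [Set.uIcc_of_le hpi] at hb
      beta_reduce
      rw [(hσd a b hb).2, pd2_Zf]
      simp only [Rf, hf]
      ring
    have c3 : ∫ b in (0:ℝ)..π, (pd2 (Zf Φ) a b + (Rf Φ a b + a * pd2 (Cf Φ) a b))
        = (Zf Φ a π - Zf Φ a 0) + ((∫ b in (0:ℝ)..π, Rf Φ a b)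
            + a * (Cf Φ a π - Cf Φ a 0)) := by
      rw [intervalIntegral.integral_add (hZint a) ((hRint a).add ((hCint a).const_mul a)),
        intervalIntegral.integral_add (hRint a) ((hCint a).const_mul a),
        intervalIntegral.integral_const_mul, integral_pd2 (hZs Φ) a 0 π,
        integral_pd2 (hCs Φ) a 0 π]
    have hZπ : Zf Φ a π = -Φ.X a π := by simp [Zf, Φ.bdryHigh]
    have hZ0 : Zf Φ a 0 = Φ.X a 0 := by simp [Zf, Φ.bdryLow]
    have hCπ : Cf Φ a π = 1 := by simp [Cf, Φ.bdryHigh]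
    have hC0 : Cf Φ a 0 = -1 := by simp [Cf, Φ.bdryLow]
    rw [c2, c3, hZπ, hZ0, hCπ, hC0] at c1
    have e1 := step1 a
    have e2 := step2 a
    linarith
  -- Step d : decompose the integral of h·sin
  have step_d : ∀ a : ℝ, (∫ b in (0:ℝ)..π, hf Φ a b * Real.sin b)
      = (∫ b in (0:ℝ)..π, pd1 (Pf Φ) a b) + ((σ 0 π + Φ.X 0 π) + flux L Φ) := by
    intro a
    have d1 : ∫ b in (0:ℝ)..π, hf Φ a b * Real.sin b
        = ∫ b in (0:ℝ)..π, (pd1 (Pf Φ) a b - pd2 (Qf Φ) a b + Rf Φ a b) := by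
      apply intervalIntegral.integral_congr
      intro b hb
      rw [Set.uIcc_of_le hpi] at hb
      beta_reduce
      simp only [Rf]
      exact star Φ a hb
    have d2 : ∫ b in (0:ℝ)..π, (pd1 (Pf Φ) a b - pd2 (Qf Φ) a b + Rf Φ a b)
        = ((∫ b in (0:ℝ)..π, pd1 (Pf Φ) a b) - (Qf Φ a π - Qf Φ a 0))
          + ((σ 0 π + Φ.X 0 π) + flux L Φ) := by
      rw [intervalIntegral.integral_add ((hPint a).sub (hQint a)) (hRint a),
        intervalIntegral.integral_sub (hPint a) (hQint a),
        integral_pd2 (hQs Φ) a 0 π, step6 a]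
    have hQπ : Qf Φ a π = 0 := by simp [Qf, pd1_Cf, Φ.bdryHigh]
    have hQ0 : Qf Φ a 0 = 0 := by simp [Qf, pd1_Cf, Φ.bdryLow]
    rw [d1, d2, hQπ, hQ0]
    ring
  -- outer integration over [0, L]
  have hPcont : Continuous fun p : ℝ × ℝ => pd1 (Pf Φ) p.1 p.2 :=
    (contDiff_pd1 (hPs Φ)).continuous
  have hA : Continuous fun a => ∫ b in (0:ℝ)..π, pd1 (Pf Φ) a b :=
    intervalIntegral.continuous_parametric_intervalIntegral_of_continuous'
      (f := fun a b => pd1 (Pf Φ) a b) (by exact hPcont) 0 π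
  have houter : ∫ a in (0:ℝ)..L, (∫ b in (0:ℝ)..π, hf Φ a b * Real.sin b)
      = (∫ a in (0:ℝ)..L, ∫ b in (0:ℝ)..π, pd1 (Pf Φ) a b)
        + (L - 0) • ((σ 0 π + Φ.X 0 π) + flux L Φ) := by
    have e1 : ∫ a in (0:ℝ)..L, (∫ b in (0:ℝ)..π, hf Φ a b * Real.sin b)
        = ∫ a in (0:ℝ)..L, ((∫ b in (0:ℝ)..π, pd1 (Pf Φ) a b)
            + ((σ 0 π + Φ.X 0 π) + flux L Φ)) :=
      intervalIntegral.integral_congr fun a _ => step_d a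
    rw [e1, intervalIntegral.integral_add (hA.intervalIntegrable 0 L)
      intervalIntegrable_const, intervalIntegral.integral_const]
  -- the double integral of pd1 Pf vanishes (Fubini + periodicity)
  have hA0 : (∫ a in (0:ℝ)..L, ∫ b in (0:ℝ)..π, pd1 (Pf Φ) a b) = 0 := by
    rw [my_swap _ hPcont hL.le hpi]
    have e2 : ∫ b in (0:ℝ)..π, (∫ a in (0:ℝ)..L, pd1 (Pf Φ) a b)
        = ∫ b in (0:ℝ)..π, (0:ℝ) := by
      apply intervalIntegral.integral_congr
      intro b hb
      rw [Set.uIcc_of_le hpi] at hb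
      beta_reduce
      rw [integral_pd1 (hPs Φ) b 0 L]
      have key : Pf Φ L b = Pf Φ 0 b := by
        rcases eq_or_lt_of_le hb.1 with h0 | h0
        · simp [Pf, pd2_Cf, ← h0, Φ.bdryLow]
        rcases eq_or_lt_of_le hb.2 with hπ | hπ
        · simp [Pf, pd2_Cf, hπ, Φ.bdryHigh]
        have hfeq : (fun t => Cf Φ L t) =ᶠ[nhds b] fun t => Cf Φ 0 t := by
          filter_upwards [isOpen_Ioo.mem_nhds (Set.mem_Ioo.2 ⟨h0, hπ⟩)] with t ht
          simp only [Cf]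
          rw [show Φ.Y L t = Φ.Y 0 t from by
            simpa using Φ.periodicY 0 t ⟨le_of_lt ht.1, le_of_lt ht.2⟩]
        have hpd2 : pd2 (Cf Φ) L b = pd2 (Cf Φ) 0 b := hfeq.deriv_eq
        have hhf : hf Φ L b = hf Φ 0 b := by
          simp only [hf]
          rw [show Φ.X L b = Φ.X 0 b + L from by
            simpa using Φ.periodicX 0 b ⟨le_of_lt h0, le_of_lt hπ⟩]
          ring
        simp only [Pf, uf, hpd2, hhf]
      rw [key, sub_self]
    rw [e2]
    simp
  -- the flux identity
  have hflux : (∫ a in (0:ℝ)..L, ∫ b in (0:ℝ)..π, hf Φ a b * Real.sin b)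
      = 2 * L * flux L Φ := by
    have e3 : flux L Φ
        = (1 / (2 * L)) * ∫ a in (0:ℝ)..L, ∫ b in (0:ℝ)..π, hf Φ a b * Real.sin b := rfl
    rw [e3]
    field_simp
  -- conclude K = flux
  have hKf : σ 0 π + Φ.X 0 π = flux L Φ := by
    rw [hflux, hA0] at houter
    simp only [smul_eq_mul, zero_add, sub_zero] at houter
    have h9 : L * ((σ 0 π + Φ.X 0 π) + flux L Φ) = L * (2 * flux L Φ) := by linarith
    have h10 := mul_left_cancel₀ (ne_of_gt hL) h9
    linarith
  -- final assembly
  have hδd : ∫ t in (0:ℝ)..1, deriv δ t = δ 1 - δ 0 :=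
    intervalIntegral.integral_deriv_eq_sub
      (fun t _ => (hδ.differentiable (by simp)).differentiableAt)
      ((hδ.continuous_deriv (by simp)).intervalIntegrable 0 1)
  rw [intervalIntegral.integral_const_mul, hδd, hδ0, hδ1, Real.cos_pi]
  have := step1 x
  linarith
end
end

section
/- Let Φ = (X,Y) ∈ 𝒟_L(S,ω) be monotone with generating function W normalized by W|_{ℝ×{0}} = −FLUX(Φ), W|_{ℝ×{π}} = FLUX(Φ). Then the action of Φ is given by σ(x,y) = W(x, Y(x,y)) + D₂W(x, Y(x,y)) · cot Y(x,y) for (x,y) in the interior of S; equivalently σ = W + (X − x) cos Y. -/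
open Real intervalIntegral

noncomputable section

/-- `Φ = (X,Y) ∈ 𝒟_L(S,ω)` is monotone if `∂Y/∂y > 0` everywhere on `S`. -/
def IsMonotone (L : ℝ) (Φ : StripMap L) : Prop :=
  ∀ (x : ℝ), ∀ y ∈ Set.Icc (0:ℝ) π, 0 < pd2 Φ.Y x y

/-- `W` is a generating function of the monotone map `Φ = (X,Y) ∈ 𝒟_L(S,ω)`:
`W` is smooth, `L`-periodic in the first variable, and
`(X−x) sin Y = D₂W(x,Y)`, `cos Y − cos y = D₁W(x,Y)`. -/
def IsGenFun (L : ℝ) (Φ : StripMap L) (W : ℝ → ℝ → ℝ) : Prop :=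
  ContDiff ℝ (⊤ : ℕ∞) (fun p : ℝ × ℝ => W p.1 p.2) ∧
  (∀ (x : ℝ), ∀ y ∈ Set.Icc (0:ℝ) π, W (x + L) y = W x y) ∧
  (∀ (x : ℝ), ∀ y ∈ Set.Icc (0:ℝ) π,
    (Φ.X x y - x) * Real.sin (Φ.Y x y) = pd2 W x (Φ.Y x y) ∧
    Real.cos (Φ.Y x y) - Real.cos y = pd1 W x (Φ.Y x y))


section Helpers

/-- Chain rule for a smooth two-variable function composed with two curves. -/
lemma hasDerivAt_comp2 {F : ℝ → ℝ → ℝ}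
    (hF : ContDiff ℝ (⊤ : ℕ∞) (fun p : ℝ × ℝ => F p.1 p.2))
    {g h : ℝ → ℝ} {g' h' t : ℝ} (hg : HasDerivAt g g' t) (hh : HasDerivAt h h' t) :
    HasDerivAt (fun s => F (g s) (h s))
      (pd1 F (g t) (h t) * g' + pd2 F (g t) (h t) * h') t := by
  have hd : DifferentiableAt ℝ (fun p : ℝ × ℝ => F p.1 p.2) (g t, h t) :=
    (hF.differentiable (by simp)).differentiableAt
  set D := fderiv ℝ (fun p : ℝ × ℝ => F p.1 p.2) (g t, h t) with hD
  have hDF : HasFDerivAt (fun p : ℝ × ℝ => F p.1 p.2) D (g t, h t) := hd.hasFDerivAt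
  have hgh : HasDerivAt (fun s => (g s, h s)) (g', h') t := hg.prodMk hh
  have hcomp := hDF.comp_hasDerivAt t hgh
  have h1 : pd1 F (g t) (h t) = D (1, 0) := by
    have h1' : HasDerivAt (fun a => F a (h t)) (D (1, 0)) (g t) := by
      have := hDF.comp_hasDerivAt (g t)
        ((hasDerivAt_id (g t)).prodMk (hasDerivAt_const (g t) (h t)))
      exact this
    simpa [pd1] using h1'.deriv
  have h2 : pd2 F (g t) (h t) = D (0, 1) := by
    have h2' : HasDerivAt (fun b => F (g t) b) (D (0, 1)) (h t) := by
      have := hDF.comp_hasDerivAt (h t)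
        ((hasDerivAt_const (h t) (g t)).prodMk (hasDerivAt_id (h t)))
      exact this
    simpa [pd2] using h2'.deriv
  have key : D (g', h') = pd1 F (g t) (h t) * g' + pd2 F (g t) (h t) * h' := by
    rw [h1, h2]
    have : (g', h') = g' • ((1:ℝ), (0:ℝ)) + h' • ((0:ℝ), (1:ℝ)) := by
      simp [Prod.ext_iff]
    rw [this, map_add, map_smul, map_smul]
    ring_nf
  rw [← key]
  exact hcomp

lemma sect2_hasDerivAt {F : ℝ → ℝ → ℝ}
    (hF : ContDiff ℝ (⊤ : ℕ∞) (fun p : ℝ × ℝ => F p.1 p.2)) (x y : ℝ) :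
    HasDerivAt (fun t => F x t) (pd2 F x y) y := by
  have := hasDerivAt_comp2 hF (hasDerivAt_const y x) (hasDerivAt_id y)
  simpa using this

lemma sect1_hasDerivAt {F : ℝ → ℝ → ℝ}
    (hF : ContDiff ℝ (⊤ : ℕ∞) (fun p : ℝ × ℝ => F p.1 p.2)) (x y : ℝ) :
    HasDerivAt (fun t => F t y) (pd1 F x y) x := by
  have := hasDerivAt_comp2 hF (hasDerivAt_id x) (hasDerivAt_const x y)
  simpa using this

end Helpers

/-- Proposition 1.11(i): for a monotone `Φ ∈ 𝒟_L(S,ω)` with generating function `W`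
normalized by `W|_{ℝ×{0}} = −FLUX(Φ)`, `W|_{ℝ×{π}} = FLUX(Φ)`, the action of `Φ` is
`σ(x,y) = W(x,Y(x,y)) + D₂W(x,Y(x,y)) · cot Y(x,y)` in the interior of `S`;
equivalently `σ = W(x,Y) + (X − x) cos Y` on all of `S`. -/
theorem action_of_generating_function (L : ℝ) (hL : 0 < L) (Φ : StripMap L)
    (hmono : IsMonotone L Φ) (W : ℝ → ℝ → ℝ) (hW : IsGenFun L Φ W)
    (hnorm0 : ∀ x : ℝ, W x 0 = -flux L Φ) (hnormπ : ∀ x : ℝ, W x π = flux L Φ)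
    (σ : ℝ → ℝ → ℝ) (hσ : IsAction L Φ σ) :
    (∀ (x : ℝ), ∀ y ∈ Set.Ioo (0:ℝ) π,
      σ x y = W x (Φ.Y x y) +
        pd2 W x (Φ.Y x y) * (Real.cos (Φ.Y x y) / Real.sin (Φ.Y x y))) ∧
    (∀ (x : ℝ), ∀ y ∈ Set.Icc (0:ℝ) π,
      σ x y = W x (Φ.Y x y) + (Φ.X x y - x) * Real.cos (Φ.Y x y)) := by
  obtain ⟨hσs, hσd, hσ0⟩ := hσ
  obtain ⟨hWs, hWper, hWgen⟩ := hW
  have hXs : ContDiff ℝ (⊤ : ℕ∞) (fun p : ℝ × ℝ => Φ.X p.1 p.2) :=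
    (contDiff_fst).comp Φ.smooth
  have hYs : ContDiff ℝ (⊤ : ℕ∞) (fun p : ℝ × ℝ => Φ.Y p.1 p.2) :=
    (contDiff_snd).comp Φ.smooth
  -- the candidate function τ
  set τ : ℝ → ℝ → ℝ :=
    fun x y => W x (Φ.Y x y) + (Φ.X x y - x) * Real.cos (Φ.Y x y) with hτ
  -- derivative of τ in the second variable
  have hτd2 : ∀ (x : ℝ), ∀ y ∈ Set.Icc (0:ℝ) π,
      HasDerivAt (fun t => τ x t) (Real.cos (Φ.Y x y) * pd2 Φ.X x y) y := by
    intro x y hy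
    have hYd : HasDerivAt (fun t => Φ.Y x t) (pd2 Φ.Y x y) y := sect2_hasDerivAt hYs x y
    have hXd : HasDerivAt (fun t => Φ.X x t) (pd2 Φ.X x y) y := sect2_hasDerivAt hXs x y
    have hWd : HasDerivAt (fun t => W x (Φ.Y x t))
        (pd1 W x (Φ.Y x y) * 0 + pd2 W x (Φ.Y x y) * pd2 Φ.Y x y) y :=
      hasDerivAt_comp2 hWs (hasDerivAt_const y x) hYd
    have hcosd : HasDerivAt (fun t => Real.cos (Φ.Y x t))
        (-Real.sin (Φ.Y x y) * pd2 Φ.Y x y) y :=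
      (Real.hasDerivAt_cos (Φ.Y x y)).comp y hYd
    have hprod := (hXd.sub_const x).mul hcosd
    have := hWd.add hprod
    have hgen := (hWgen x y hy).1
    refine this.congr_deriv ?_
    rw [← hgen]
    ring
  -- derivative of σ in the second variable
  have hσd2 : ∀ (x : ℝ), ∀ y ∈ Set.Icc (0:ℝ) π,
      HasDerivAt (fun t => σ x t) (Real.cos (Φ.Y x y) * pd2 Φ.X x y) y := by
    intro x y hy
    have := sect2_hasDerivAt hσs x y
    rwa [(hσd x y hy).2] at this
  -- σ and τ agree on the bottom boundary
  have hbot : ∀ x : ℝ, σ x 0 = τ x 0 := by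
    have hg : ∀ x : ℝ, HasDerivAt (fun t => σ t 0 - τ t 0) 0 x := by
      intro x
      have hy0 : (0:ℝ) ∈ Set.Icc (0:ℝ) π := ⟨le_refl _, Real.pi_pos.le⟩
      have hσ1 : HasDerivAt (fun t => σ t 0) (pd1 σ x 0) x := sect1_hasDerivAt hσs x 0
      have hσ1' : pd1 σ x 0 = pd1 Φ.X x 0 - 1 := by
        have := (hσd x 0 hy0).1
        rw [this, Φ.bdryLow x]
        simp
      -- τ t 0 = W t 0 + (X t 0 - t)
      have hτeq : ∀ t : ℝ, τ t 0 = W t 0 + (Φ.X t 0 - t) := by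
        intro t
        simp [hτ, Φ.bdryLow t]
      have hτ1 : HasDerivAt (fun t => τ t 0) (pd1 W x 0 + (pd1 Φ.X x 0 - 1)) x := by
        have hWd : HasDerivAt (fun t => W t 0) (pd1 W x 0) x := sect1_hasDerivAt hWs x 0
        have hXd : HasDerivAt (fun t => Φ.X t 0) (pd1 Φ.X x 0) x := sect1_hasDerivAt hXs x 0
        have : HasDerivAt (fun t => W t 0 + (Φ.X t 0 - t))
            (pd1 W x 0 + (pd1 Φ.X x 0 - 1)) x := hWd.add (hXd.sub (hasDerivAt_id x))
        have heq : (fun t => τ t 0) = fun t => W t 0 + (Φ.X t 0 - t) := funext hτeq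
        rw [heq]
        exact this
      have hW10 : pd1 W x 0 = 0 := by
        have : (fun t => W t 0) = fun _ => -flux L Φ := funext hnorm0
        simp [pd1, this]
      have := hσ1.sub hτ1
      rw [hσ1', hW10] at this
      rw [zero_add, sub_self] at this
      exact this
    have hconst : ∀ x : ℝ, σ x 0 - τ x 0 = σ 0 0 - τ 0 0 := by
      intro x
      exact is_const_of_deriv_eq_zero
        (fun t => ((hg t).differentiableAt)) (fun t => (hg t).deriv) x 0
    have h00 : σ 0 0 = τ 0 0 := by
      rw [hσ0]
      simp [hτ, Φ.bdryLow 0, hnorm0 0]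
      ring
    intro x
    have := hconst x
    rw [h00] at this
    linarith
  -- the second (main) conclusion
  have main : ∀ (x : ℝ), ∀ y ∈ Set.Icc (0:ℝ) π, σ x y = τ x y := by
    intro x y hy
    have hcont : ContinuousOn (fun t => σ x t - τ x t) (Set.Icc 0 π) := by
      apply Continuous.continuousOn
      have h1 : Continuous (fun t => σ x t) :=
        (hσs.continuous).comp (continuous_const.prodMk continuous_id)
      have h2 : Continuous (fun t => τ x t) := by
        have hYc : Continuous (fun t => Φ.Y x t) :=
          (hYs.continuous).comp (continuous_const.prodMk continuous_id)
        have hXc : Continuous (fun t => Φ.X x t) :=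
          (hXs.continuous).comp (continuous_const.prodMk continuous_id)
        have hWc : Continuous (fun t => W x (Φ.Y x t)) :=
          (hWs.continuous).comp (continuous_const.prodMk hYc)
        exact hWc.add ((hXc.sub continuous_const).mul (Real.continuous_cos.comp hYc))
      exact h1.sub h2
    have hder : ∀ t ∈ Set.Ico (0:ℝ) π,
        HasDerivWithinAt (fun t => σ x t - τ x t) 0 (Set.Ici t) t := by
      intro t ht
      have ht' : t ∈ Set.Icc (0:ℝ) π := ⟨ht.1, ht.2.le⟩
      have := (hσd2 x t ht').sub (hτd2 x t ht')
      have h0 := this.hasDerivWithinAt (s := Set.Ici t)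
      rw [sub_self] at h0
      exact h0
    have := constant_of_has_deriv_right_zero hcont hder y hy
    have hb := hbot x
    have : σ x y - τ x y = σ x 0 - τ x 0 := this
    rw [hb] at this
    linarith
  constructor
  · -- interior formula
    intro x y hy
    have hy' : y ∈ Set.Icc (0:ℝ) π := ⟨hy.1.le, hy.2.le⟩
    have hYint : Φ.Y x y ∈ Set.Ioo (0:ℝ) π := by
      have hIcc : Set.Icc (0:ℝ) π ⊆ Set.Icc (0:ℝ) π := le_refl _
      have hmonoY : StrictMonoOn (fun t => Φ.Y x t) (Set.Icc 0 π) := by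
        apply strictMonoOn_of_deriv_pos (convex_Icc 0 π)
        · exact ((hYs.continuous).comp
            (continuous_const.prodMk continuous_id)).continuousOn
        · intro t ht
          rw [interior_Icc] at ht
          have := hmono x t ⟨ht.1.le, ht.2.le⟩
          rwa [show deriv (fun t => Φ.Y x t) t = pd2 Φ.Y x t from rfl]
      constructor
      · have := hmonoY ⟨le_refl 0, Real.pi_pos.le⟩ hy' hy.1
        simpa [Φ.bdryLow x] using this
      · have := hmonoY hy' ⟨Real.pi_pos.le, le_refl π⟩ hy.2
        simpa [Φ.bdryHigh x] using this
    have hsin : Real.sin (Φ.Y x y) ≠ 0 :=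
      ne_of_gt (Real.sin_pos_of_pos_of_lt_pi hYint.1 hYint.2)
    have hgen := (hWgen x y hy').1
    rw [main x y hy', hτ]
    simp only
    rw [← hgen]
    field_simp
  · intro x y hy
    exact main x y hy
end
end

section
/- Let Φ ∈ 𝒟_L(S,ω) be monotone with FLUX(Φ) = 0 and generating function W normalized to vanish on ∂S. Then the Calabi invariant satisfies CAL(Φ) = (1/(2L)) ∫∫_{[0,L]×[0,π]} (W(x,y) + W(x, Y(x,y))) sin y dx dy. -/
open Real intervalIntegral MeasureTheory ContDiff

noncomputable section

/-- The Calabi invariant of `Φ` (with zero flux) whose action is `σ`: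
`CAL(Φ) = (1/(2L)) ∫∫_{[0,L]×[0,π]} σ ω`. -/
def cal (L : ℝ) (σ : ℝ → ℝ → ℝ) : ℝ :=
  (1 / (2 * L)) * ∫ x in (0:ℝ)..L, ∫ y in (0:ℝ)..π, σ x y * Real.sin y


namespace CalAux

def unc (f : ℝ → ℝ → ℝ) : ℝ × ℝ → ℝ := fun p => f p.1 p.2

theorem le_infty : (1 : WithTop ℕ∞) ≤ ∞ := by exact_mod_cast le_top

variable {f : ℝ → ℝ → ℝ}

theorem hasDerivAt1 (hf : ContDiff ℝ (⊤ : ℕ∞) (unc f)) (x y : ℝ) :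
    HasDerivAt (fun t => f t y) (fderiv ℝ (unc f) (x, y) (1, 0)) x := by
  have := ((hf.differentiable (by simp) (x, y)).hasFDerivAt).comp_hasDerivAt x
    ((hasDerivAt_id x).prodMk (hasDerivAt_const x y))
  exact this

theorem hasDerivAt2 (hf : ContDiff ℝ (⊤ : ℕ∞) (unc f)) (x y : ℝ) :
    HasDerivAt (fun t => f x t) (fderiv ℝ (unc f) (x, y) (0, 1)) y := by
  have := ((hf.differentiable (by simp) (x, y)).hasFDerivAt).comp_hasDerivAt y
    ((hasDerivAt_const y x).prodMk (hasDerivAt_id y))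
  exact this

theorem pd1_eq (hf : ContDiff ℝ (⊤ : ℕ∞) (unc f)) (x y : ℝ) :
    pd1 f x y = fderiv ℝ (unc f) (x, y) (1, 0) := (hasDerivAt1 hf x y).deriv

theorem pd2_eq (hf : ContDiff ℝ (⊤ : ℕ∞) (unc f)) (x y : ℝ) :
    pd2 f x y = fderiv ℝ (unc f) (x, y) (0, 1) := (hasDerivAt2 hf x y).deriv

theorem hasDerivAt_pd1 (hf : ContDiff ℝ (⊤ : ℕ∞) (unc f)) (x y : ℝ) :
    HasDerivAt (fun t => f t y) (pd1 f x y) x := (hasDerivAt1 hf x y).differentiableAt.hasDerivAt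

theorem hasDerivAt_pd2 (hf : ContDiff ℝ (⊤ : ℕ∞) (unc f)) (x y : ℝ) :
    HasDerivAt (fun t => f x t) (pd2 f x y) y := (hasDerivAt2 hf x y).differentiableAt.hasDerivAt

theorem cont_pd1 (hf : ContDiff ℝ (⊤ : ℕ∞) (unc f)) :
    Continuous fun p : ℝ × ℝ => pd1 f p.1 p.2 := by
  have h : (fun p : ℝ × ℝ => pd1 f p.1 p.2) = fun p => fderiv ℝ (unc f) p ((1 : ℝ), (0 : ℝ)) := by
    funext p
    rw [pd1_eq hf p.1 p.2]
  rw [h]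
  exact (hf.continuous_fderiv (by simp)).clm_apply continuous_const

theorem cont_pd2 (hf : ContDiff ℝ (⊤ : ℕ∞) (unc f)) :
    Continuous fun p : ℝ × ℝ => pd2 f p.1 p.2 := by
  have h : (fun p : ℝ × ℝ => pd2 f p.1 p.2) = fun p => fderiv ℝ (unc f) p ((0 : ℝ), (1 : ℝ)) := by
    funext p
    rw [pd2_eq hf p.1 p.2]
  rw [h]
  exact (hf.continuous_fderiv (by simp)).clm_apply continuous_const

/-- mixed second partial -/
def m2 (f : ℝ → ℝ → ℝ) (x y : ℝ) : ℝ := fderiv ℝ (fderiv ℝ (unc f)) (x, y) (1, 0) (0, 1)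

theorem fderiv_contDiff (hf : ContDiff ℝ (⊤ : ℕ∞) (unc f)) :
    ContDiff ℝ ∞ (fderiv ℝ (unc f)) := (contDiff_infty_iff_fderiv.mp (hf.of_le (by simp))).2

theorem hasDerivAt_pd2_1 (hf : ContDiff ℝ (⊤ : ℕ∞) (unc f)) (x y : ℝ) :
    HasDerivAt (fun t => pd2 f t y) (m2 f x y) x := by
  have hG := fderiv_contDiff hf
  have h1 : HasDerivAt (fun t => fderiv ℝ (unc f) (t, y))
      (fderiv ℝ (fderiv ℝ (unc f)) (x, y) (1, 0)) x := by
    have := ((hG.differentiable (by simp) (x, y)).hasFDerivAt).comp_hasDerivAt x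
      ((hasDerivAt_id x).prodMk (hasDerivAt_const x y))
    exact this
  have h2 := h1.clm_apply (hasDerivAt_const x ((0 : ℝ), (1 : ℝ)))
  simp only [map_zero, add_zero] at h2
  have h : (fun t => pd2 f t y) = fun t => fderiv ℝ (unc f) (t, y) ((0 : ℝ), (1 : ℝ)) := by
    funext t; rw [pd2_eq hf t y]
  rw [h]
  exact h2

theorem hasDerivAt_pd1_2 (hf : ContDiff ℝ (⊤ : ℕ∞) (unc f)) (x y : ℝ) :
    HasDerivAt (fun t => pd1 f x t) (m2 f x y) y := by
  have hG := fderiv_contDiff hf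
  have h1 : HasDerivAt (fun t => fderiv ℝ (unc f) (x, t))
      (fderiv ℝ (fderiv ℝ (unc f)) (x, y) (0, 1)) y := by
    have := ((hG.differentiable (by simp) (x, y)).hasFDerivAt).comp_hasDerivAt y
      ((hasDerivAt_const y x).prodMk (hasDerivAt_id y))
    exact this
  have h2 := h1.clm_apply (hasDerivAt_const y ((1 : ℝ), (0 : ℝ)))
  simp only [map_zero, add_zero] at h2
  have h : (fun t => pd1 f x t) = fun t => fderiv ℝ (unc f) (x, t) ((1 : ℝ), (0 : ℝ)) := by
    funext t; rw [pd1_eq hf x t]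
  rw [h]
  have hsymm : fderiv ℝ (fderiv ℝ (unc f)) (x, y) (0, 1) (1, 0) = m2 f x y :=
    second_derivative_symmetric (fun p => (hf.differentiable (by simp) p).hasFDerivAt)
      ((fderiv_contDiff hf).differentiable (by simp) (x, y)).hasFDerivAt (0, 1) (1, 0)
  rw [← hsymm]
  exact h2

theorem cont_m2 (hf : ContDiff ℝ (⊤ : ℕ∞) (unc f)) :
    Continuous fun p : ℝ × ℝ => m2 f p.1 p.2 := by
  have hG := fderiv_contDiff hf
  have h : (fun p : ℝ × ℝ => m2 f p.1 p.2) =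
      fun p => fderiv ℝ (fderiv ℝ (unc f)) p ((1 : ℝ), (0 : ℝ)) ((0 : ℝ), (1 : ℝ)) := by
    funext p; rfl
  rw [h]
  exact (((hG.continuous_fderiv (by simp)).clm_apply continuous_const).clm_apply continuous_const)

/-- chain rule for two-variable functions along a curve -/
theorem hasDerivAt_comp2 (hf : ContDiff ℝ (⊤ : ℕ∞) (unc f)) {c₁ c₂ : ℝ → ℝ} {d₁ d₂ : ℝ} (x : ℝ)
    (h₁ : HasDerivAt c₁ d₁ x) (h₂ : HasDerivAt c₂ d₂ x) :
    HasDerivAt (fun t => f (c₁ t) (c₂ t))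
      (pd1 f (c₁ x) (c₂ x) * d₁ + pd2 f (c₁ x) (c₂ x) * d₂) x := by
  have hD := (hf.differentiable (by simp) (c₁ x, c₂ x)).hasFDerivAt
  have h := hD.comp_hasDerivAt x (h₁.prodMk h₂)
  have e : ((d₁, d₂) : ℝ × ℝ) = d₁ • ((1 : ℝ), (0 : ℝ)) + d₂ • ((0 : ℝ), (1 : ℝ)) := by
    simp [Prod.ext_iff]
  rw [e, map_add, _root_.map_smul, _root_.map_smul, smul_eq_mul, smul_eq_mul] at h
  rw [pd1_eq hf, pd2_eq hf]
  refine h.congr_deriv ?_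
  ring

/-- swap of iterated interval integrals for continuous integrands -/
theorem swap_integrals {L b : ℝ} (hL : 0 ≤ L) (hb : 0 ≤ b) {f : ℝ → ℝ → ℝ}
    (hf : Continuous fun p : ℝ × ℝ => f p.1 p.2) :
    ∫ x in (0:ℝ)..L, ∫ y in (0:ℝ)..b, f x y = ∫ y in (0:ℝ)..b, ∫ x in (0:ℝ)..L, f x y := by
  have h1 : ∀ g : ℝ → ℝ, ∫ x in (0:ℝ)..L, g x = ∫ x in Set.Ioc (0:ℝ) L, g x := fun g =>
    intervalIntegral.integral_of_le hL
  have h2 : ∀ g : ℝ → ℝ, ∫ y in (0:ℝ)..b, g y = ∫ y in Set.Ioc (0:ℝ) b, g y := fun g =>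
    intervalIntegral.integral_of_le hb
  rw [h1, h2]
  simp_rw [h2, h1]
  apply MeasureTheory.integral_integral_swap
  have : Integrable (fun p : ℝ × ℝ => f p.1 p.2)
      ((volume.restrict (Set.Ioc (0:ℝ) L)).prod (volume.restrict (Set.Ioc (0:ℝ) b))) := by
    rw [MeasureTheory.Measure.prod_restrict]
    exact (hf.continuousOn.integrableOn_compact (isCompact_Icc.prod isCompact_Icc)).mono_set
      (Set.prod_mono Set.Ioc_subset_Icc_self Set.Ioc_subset_Icc_self)
  exact this


variable {L : ℝ} (Φ : StripMap L)

theorem hXs : ContDiff ℝ (⊤ : ℕ∞) (unc Φ.X) := contDiff_fst.comp Φ.smooth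
theorem hYs : ContDiff ℝ (⊤ : ℕ∞) (unc Φ.Y) := contDiff_snd.comp Φ.smooth

def Aa (x y : ℝ) : ℝ :=
  (Φ.X x y - x)^2/2 * (Real.cos (Φ.Y x y) * Real.sin (Φ.Y x y))

def Axx (x y : ℝ) : ℝ :=
  (Φ.X x y - x) * (pd1 Φ.X x y - 1) * (Real.cos (Φ.Y x y) * Real.sin (Φ.Y x y))
  + (Φ.X x y - x)^2/2 * ((Real.cos (Φ.Y x y)^2 - Real.sin (Φ.Y x y)^2) * pd1 Φ.Y x y)

def Ayy (x y : ℝ) : ℝ :=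
  (Φ.X x y - x) * pd2 Φ.X x y * (Real.cos (Φ.Y x y) * Real.sin (Φ.Y x y))
  + (Φ.X x y - x)^2/2 * ((Real.cos (Φ.Y x y)^2 - Real.sin (Φ.Y x y)^2) * pd2 Φ.Y x y)

def B1 (x y : ℝ) : ℝ := Aa Φ x y * pd2 Φ.Y x y
def B2 (x y : ℝ) : ℝ := Aa Φ x y * pd1 Φ.Y x y
def dB1 (x y : ℝ) : ℝ := Axx Φ x y * pd2 Φ.Y x y + Aa Φ x y * m2 Φ.Y x y

theorem hasDerivAt_Aa1 (x y : ℝ) : HasDerivAt (fun t => Aa Φ t y) (Axx Φ x y) x := by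
  have hu : HasDerivAt (fun t => (Φ.X t y - t)^2/2) ((Φ.X x y - x) * (pd1 Φ.X x y - 1)) x := by
    have h := (((hasDerivAt_pd1 (hXs Φ) x y).fun_sub (hasDerivAt_id x)).fun_pow 2).div_const 2
    refine h.congr_deriv ?_
    norm_num
    try ring
  have hc : HasDerivAt (fun t => Real.cos (Φ.Y t y) * Real.sin (Φ.Y t y))
      ((Real.cos (Φ.Y x y)^2 - Real.sin (Φ.Y x y)^2) * pd1 Φ.Y x y) x := by
    have h1 := (Real.hasDerivAt_cos (Φ.Y x y)).comp x (hasDerivAt_pd1 (hYs Φ) x y)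
    have h2 := (Real.hasDerivAt_sin (Φ.Y x y)).comp x (hasDerivAt_pd1 (hYs Φ) x y)
    have h := h1.fun_mul h2
    refine h.congr_deriv ?_
    simp only [Function.comp]
    ring
  have h := hu.fun_mul hc
  refine h.congr_deriv ?_
  all_goals unfold Axx
  all_goals ring

theorem hasDerivAt_Aa2 (x y : ℝ) : HasDerivAt (fun t => Aa Φ x t) (Ayy Φ x y) y := by
  have hu : HasDerivAt (fun t => (Φ.X x t - x)^2/2) ((Φ.X x y - x) * pd2 Φ.X x y) y := by
    have h := (((hasDerivAt_pd2 (hXs Φ) x y).sub_const x).fun_pow 2).div_const 2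
    refine h.congr_deriv ?_
    norm_num
    try ring
  have hc : HasDerivAt (fun t => Real.cos (Φ.Y x t) * Real.sin (Φ.Y x t))
      ((Real.cos (Φ.Y x y)^2 - Real.sin (Φ.Y x y)^2) * pd2 Φ.Y x y) y := by
    have h1 := (Real.hasDerivAt_cos (Φ.Y x y)).comp y (hasDerivAt_pd2 (hYs Φ) x y)
    have h2 := (Real.hasDerivAt_sin (Φ.Y x y)).comp y (hasDerivAt_pd2 (hYs Φ) x y)
    have h := h1.fun_mul h2
    refine h.congr_deriv ?_
    simp only [Function.comp]
    ring
  have h := hu.fun_mul hc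
  refine h.congr_deriv ?_
  all_goals unfold Ayy
  all_goals ring

theorem hasDerivAt_B1_1 (x y : ℝ) : HasDerivAt (fun t => B1 Φ t y) (dB1 Φ x y) x :=
  (hasDerivAt_Aa1 Φ x y).mul (hasDerivAt_pd2_1 (hYs Φ) x y)

theorem hasDerivAt_B2_2 (x y : ℝ) :
    HasDerivAt (fun t => B2 Φ x t) (Ayy Φ x y * pd1 Φ.Y x y + Aa Φ x y * m2 Φ.Y x y) y :=
  (hasDerivAt_Aa2 Φ x y).mul (hasDerivAt_pd1_2 (hYs Φ) x y)

theorem cont_Aa : Continuous fun p : ℝ × ℝ => Aa Φ p.1 p.2 := by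
  have hX := (hXs Φ).continuous
  have hY := (hYs Φ).continuous
  exact (((hX.sub continuous_fst).pow 2).div_const 2).mul
    ((Real.continuous_cos.comp hY).mul (Real.continuous_sin.comp hY))

theorem cont_dB1 : Continuous fun p : ℝ × ℝ => dB1 Φ p.1 p.2 := by
  have hX := (hXs Φ).continuous
  have hY := (hYs Φ).continuous
  have hAx : Continuous fun p : ℝ × ℝ => Axx Φ p.1 p.2 := by
    exact (((hX.sub continuous_fst).mul ((cont_pd1 (hXs Φ)).sub continuous_const)).mul
        ((Real.continuous_cos.comp hY).mul (Real.continuous_sin.comp hY))).add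
      ((((hX.sub continuous_fst).pow 2).div_const 2).mul
        ((((Real.continuous_cos.comp hY).pow 2).sub
          ((Real.continuous_sin.comp hY).pow 2)).mul (cont_pd1 (hYs Φ))))
  exact (hAx.mul (cont_pd2 (hYs Φ))).add ((cont_Aa Φ).mul (cont_m2 (hYs Φ)))

theorem B1_per (hL : 0 < L) {y : ℝ} (hy : y ∈ Set.Icc (0:ℝ) π) : B1 Φ L y = B1 Φ 0 y := by
  rcases eq_or_lt_of_le hy.1 with h0 | h0
  · rw [← h0]
    simp [B1, Aa, Φ.bdryLow]
  rcases eq_or_lt_of_le hy.2 with hπ | hπ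
  · rw [hπ]
    simp [B1, Aa, Φ.bdryHigh]
  have hYe : Φ.Y L y = Φ.Y 0 y := by
    have := Φ.periodicY 0 y hy
    rwa [zero_add] at this
  have hXe : Φ.X L y = Φ.X 0 y + L := by
    have := Φ.periodicX 0 y hy
    rwa [zero_add] at this
  have hpd : pd2 Φ.Y L y = pd2 Φ.Y 0 y := by
    unfold pd2
    apply Filter.EventuallyEq.deriv_eq
    filter_upwards [Ioo_mem_nhds h0 hπ] with t ht
    have := Φ.periodicY 0 t (Set.Ioo_subset_Icc_self ht)
    rwa [zero_add] at this
  unfold B1 Aa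
  rw [hYe, hXe, hpd]
  ring

end CalAux

/-- Proposition 1.11(ii): if `Φ ∈ 𝒟_L(S,ω)` is monotone with `FLUX(Φ) = 0` and `W` is its
generating function normalized to vanish on `∂S`, then
`CAL(Φ) = (1/(2L)) ∫∫_{[0,L]×[0,π]} (W(x,y) + W(x,Y(x,y))) sin y dx dy`. -/
theorem calabi_of_generating_function (L : ℝ) (hL : 0 < L) (Φ : StripMap L)
    (hmono : IsMonotone L Φ) (hflux : flux L Φ = 0)
    (W : ℝ → ℝ → ℝ) (hW : IsGenFun L Φ W)
    (hnorm0 : ∀ x : ℝ, W x 0 = 0) (hnormπ : ∀ x : ℝ, W x π = 0)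
    (σ : ℝ → ℝ → ℝ) (hσ : IsAction L Φ σ) :
    cal L σ =
      (1 / (2 * L)) * ∫ x in (0:ℝ)..L, ∫ y in (0:ℝ)..π,
        (W x y + W x (Φ.Y x y)) * Real.sin y := by
  obtain ⟨hσs, hσd, hσ0⟩ := hσ
  obtain ⟨hWs, hWper, hWgen⟩ := hW
  have hXs : ContDiff ℝ (⊤ : ℕ∞) (CalAux.unc Φ.X) := CalAux.hXs Φ
  have hYs : ContDiff ℝ (⊤ : ℕ∞) (CalAux.unc Φ.Y) := CalAux.hYs Φ
  have hσs' : ContDiff ℝ (⊤ : ℕ∞) (CalAux.unc σ) := hσs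
  have hWs' : ContDiff ℝ (⊤ : ℕ∞) (CalAux.unc W) := hWs
  have hCX : Continuous fun p : ℝ × ℝ => Φ.X p.1 p.2 := hXs.continuous
  have hCY : Continuous fun p : ℝ × ℝ => Φ.Y p.1 p.2 := hYs.continuous
  have hCσ : Continuous fun p : ℝ × ℝ => σ p.1 p.2 := hσs'.continuous
  have hCW : Continuous fun p : ℝ × ℝ => W p.1 p.2 := hWs'.continuous
  -- Step A : σ = W(x, Y) + (X - x) cos Y on the strip
  have hσU : ∀ x : ℝ, ∀ y ∈ Set.Icc (0:ℝ) π,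
      σ x y = W x (Φ.Y x y) + (Φ.X x y - x) * Real.cos (Φ.Y x y) := by
    have hd1 : ∀ y ∈ Set.Icc (0:ℝ) π, ∀ x : ℝ,
        HasDerivAt (fun t => σ t y -
          (W t (Φ.Y t y) + (Φ.X t y - t) * Real.cos (Φ.Y t y))) 0 x := by
      intro y hy x
      have h1 := CalAux.hasDerivAt_pd1 hσs' x y
      have hWd : HasDerivAt (fun t => W t (Φ.Y t y))
          (pd1 W x (Φ.Y x y) * 1 + pd2 W x (Φ.Y x y) * pd1 Φ.Y x y) x :=
        CalAux.hasDerivAt_comp2 hWs' x (hasDerivAt_id x) (CalAux.hasDerivAt_pd1 hYs x y)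
      have hcd : HasDerivAt (fun t => Real.cos (Φ.Y t y))
          (-Real.sin (Φ.Y x y) * pd1 Φ.Y x y) x :=
        by have := (Real.hasDerivAt_cos (Φ.Y x y)).comp x (CalAux.hasDerivAt_pd1 hYs x y); exact this
      have hud : HasDerivAt (fun t => Φ.X t y - t) (pd1 Φ.X x y - 1) x :=
        (CalAux.hasDerivAt_pd1 hXs x y).sub (hasDerivAt_id x)
      have h := h1.sub (hWd.add (hud.mul hcd))
      refine h.congr_deriv ?_
      obtain ⟨hg1, hg2⟩ := hWgen x y hy
      obtain ⟨hs1, hs2⟩ := hσd x y hy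
      rw [hs1, ← hg1, ← hg2]
      ring
    have hd2 : ∀ t ∈ Set.Icc (0:ℝ) π,
        HasDerivAt (fun s => σ 0 s -
          (W 0 (Φ.Y 0 s) + (Φ.X 0 s - 0) * Real.cos (Φ.Y 0 s))) 0 t := by
      intro t ht
      have h1 := CalAux.hasDerivAt_pd2 hσs' 0 t
      have hWd : HasDerivAt (fun s => W 0 (Φ.Y 0 s))
          (pd1 W 0 (Φ.Y 0 t) * 0 + pd2 W 0 (Φ.Y 0 t) * pd2 Φ.Y 0 t) t :=
        CalAux.hasDerivAt_comp2 hWs' t (hasDerivAt_const t 0) (CalAux.hasDerivAt_pd2 hYs 0 t)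
      have hcd : HasDerivAt (fun s => Real.cos (Φ.Y 0 s))
          (-Real.sin (Φ.Y 0 t) * pd2 Φ.Y 0 t) t :=
        by have := (Real.hasDerivAt_cos (Φ.Y 0 t)).comp t (CalAux.hasDerivAt_pd2 hYs 0 t); exact this
      have hud : HasDerivAt (fun s => Φ.X 0 s - 0) (pd2 Φ.X 0 t) t := by
        simpa using (CalAux.hasDerivAt_pd2 hXs 0 t).sub_const 0
      have h := h1.sub (hWd.add (hud.mul hcd))
      refine h.congr_deriv ?_
      obtain ⟨hg1, hg2⟩ := hWgen 0 t ht
      obtain ⟨hs1, hs2⟩ := hσd 0 t ht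
      rw [hs2, ← hg1]
      ring
    intro x y hy
    have e1 : σ x y - (W x (Φ.Y x y) + (Φ.X x y - x) * Real.cos (Φ.Y x y)) =
        σ 0 y - (W 0 (Φ.Y 0 y) + (Φ.X 0 y - 0) * Real.cos (Φ.Y 0 y)) :=
      is_const_of_deriv_eq_zero
        (fun t => (hd1 y hy t).differentiableAt) (fun t => (hd1 y hy t).deriv) x 0
    have e2 : σ 0 y - (W 0 (Φ.Y 0 y) + (Φ.X 0 y - 0) * Real.cos (Φ.Y 0 y)) =
        σ 0 0 - (W 0 (Φ.Y 0 0) + (Φ.X 0 0 - 0) * Real.cos (Φ.Y 0 0)) := by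
      have hsub : Set.uIcc (0:ℝ) y ⊆ Set.Icc (0:ℝ) π := by
        rw [Set.uIcc_of_le hy.1]
        exact Set.Icc_subset_Icc_right hy.2
      have h := intervalIntegral.integral_eq_sub_of_hasDerivAt
        (f' := fun _ => (0:ℝ)) (fun t ht => hd2 t (hsub ht)) (intervalIntegrable_const)
      simp only [intervalIntegral.integral_zero] at h
      linarith
    have e3 : σ 0 0 - (W 0 (Φ.Y 0 0) + (Φ.X 0 0 - 0) * Real.cos (Φ.Y 0 0)) = 0 := by
      rw [hσ0, hflux, Φ.bdryLow, hnorm0, Real.cos_zero]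
      ring
    linarith
  -- Step B : inner integral identity for each x
  have key : ∀ x : ℝ,
      (∫ y in (0:ℝ)..π, σ x y * Real.sin y) =
        (∫ y in (0:ℝ)..π, (W x y + W x (Φ.Y x y)) * Real.sin y) +
        ∫ y in (0:ℝ)..π, CalAux.dB1 Φ x y := by
    intro x
    have hmkx : Continuous fun t : ℝ => ((x, t) : ℝ × ℝ) :=
      continuous_const.prodMk continuous_id
    have hgc : Continuous fun s : ℝ => W x s * Real.sin s :=
      (hCW.comp hmkx).mul Real.continuous_sin
    set g : ℝ → ℝ := fun t => ∫ s in (0:ℝ)..t, W x s * Real.sin s with hgdef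
    have hg : ∀ t : ℝ, HasDerivAt g (W x t * Real.sin t) t := fun t =>
      (hgc.integral_hasStrictDerivAt 0 t).hasDerivAt
    set F : ℝ → ℝ := fun t => W x (Φ.Y x t) * Real.cos (Φ.Y x t) + g (Φ.Y x t) - g t -
      CalAux.B2 Φ x t with hFdef
    have hF : ∀ y ∈ Set.uIcc (0:ℝ) π,
        HasDerivAt F (σ x y * Real.sin y -
          (W x y + W x (Φ.Y x y)) * Real.sin y - CalAux.dB1 Φ x y) y := by
      intro y hy
      rw [Set.uIcc_of_le Real.pi_pos.le] at hy
      have hYd := CalAux.hasDerivAt_pd2 hYs x y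
      have hW2 : HasDerivAt (fun t => W x (Φ.Y x t))
          (pd1 W x (Φ.Y x y) * 0 + pd2 W x (Φ.Y x y) * pd2 Φ.Y x y) y :=
        CalAux.hasDerivAt_comp2 hWs' y (hasDerivAt_const y x) hYd
      have hcos : HasDerivAt (fun t => Real.cos (Φ.Y x t))
          (-Real.sin (Φ.Y x y) * pd2 Φ.Y x y) y :=
        by have := (Real.hasDerivAt_cos (Φ.Y x y)).comp y hYd; exact this
      have hP1 := hW2.mul hcos
      have hP2 : HasDerivAt (fun t => g (Φ.Y x t))
          (W x (Φ.Y x y) * Real.sin (Φ.Y x y) * pd2 Φ.Y x y) y :=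
        by have := (hg (Φ.Y x y)).comp y hYd; exact this
      have hP3 := hg y
      have hP4 := CalAux.hasDerivAt_B2_2 Φ x y
      have h := ((hP1.add hP2).sub hP3).sub hP4
      rw [hFdef]
      refine h.congr_deriv ?_
      obtain ⟨hg1, hg2⟩ := hWgen x y hy
      have harea := Φ.areaPres x y hy
      rw [hσU x y hy, ← hg1]
      unfold CalAux.dB1 CalAux.Axx CalAux.Ayy CalAux.Aa
      linear_combination ((Φ.X x y - x) * Real.cos (Φ.Y x y)) * harea
    have hint1 : IntervalIntegrable (fun y => σ x y * Real.sin y) volume 0 π :=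
      ((hCσ.comp hmkx).mul Real.continuous_sin).intervalIntegrable 0 π
    have hint2 : IntervalIntegrable
        (fun y => (W x y + W x (Φ.Y x y)) * Real.sin y) volume 0 π := by
      apply Continuous.intervalIntegrable
      exact (((hCW.comp hmkx).add
        (hCW.comp (continuous_const.prodMk (hCY.comp hmkx)))).mul Real.continuous_sin)
    have hint3 : IntervalIntegrable (fun y => CalAux.dB1 Φ x y) volume 0 π :=
      ((CalAux.cont_dB1 Φ).comp hmkx).intervalIntegrable 0 π
    have h0 := intervalIntegral.integral_eq_sub_of_hasDerivAt hF
      (((hint1.sub hint2).sub hint3))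
    have hFπ : F π = 0 := by
      rw [hFdef]
      simp only [Φ.bdryHigh, hnormπ, CalAux.B2, CalAux.Aa, Real.sin_pi]
      ring
    have hF0 : F 0 = 0 := by
      rw [hFdef]
      simp only [Φ.bdryLow, hnorm0, CalAux.B2, CalAux.Aa, Real.sin_zero]
      simp [hgdef]
    rw [intervalIntegral.integral_sub (hint1.sub hint2) hint3,
      intervalIntegral.integral_sub hint1 hint2, hFπ, hF0] at h0
    linarith
  -- Step C : outer integration
  have hunc2 : Continuous fun p : ℝ × ℝ => (W p.1 p.2 + W p.1 (Φ.Y p.1 p.2)) * Real.sin p.2 :=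
    ((hCW.add (hCW.comp (continuous_fst.prodMk hCY))).mul
      (Real.continuous_sin.comp continuous_snd))
  have hunc3 : Continuous fun p : ℝ × ℝ => CalAux.dB1 Φ p.1 p.2 := CalAux.cont_dB1 Φ
  have hInt2 : IntervalIntegrable
      (fun x => ∫ y in (0:ℝ)..π, (W x y + W x (Φ.Y x y)) * Real.sin y) volume 0 L := by
    apply Continuous.intervalIntegrable
    exact intervalIntegral.continuous_parametric_intervalIntegral_of_continuous'
      (f := fun x y => (W x y + W x (Φ.Y x y)) * Real.sin y) hunc2 0 π
  have hInt3 : IntervalIntegrable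
      (fun x => ∫ y in (0:ℝ)..π, CalAux.dB1 Φ x y) volume 0 L := by
    apply Continuous.intervalIntegrable
    exact intervalIntegral.continuous_parametric_intervalIntegral_of_continuous'
      (f := fun x y => CalAux.dB1 Φ x y) hunc3 0 π
  have houter : (∫ x in (0:ℝ)..L, ∫ y in (0:ℝ)..π, σ x y * Real.sin y) =
      (∫ x in (0:ℝ)..L, ∫ y in (0:ℝ)..π, (W x y + W x (Φ.Y x y)) * Real.sin y) +
        ∫ x in (0:ℝ)..L, ∫ y in (0:ℝ)..π, CalAux.dB1 Φ x y := by
    rw [← intervalIntegral.integral_add hInt2 hInt3]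
    apply intervalIntegral.integral_congr
    intro x _
    exact key x
  have hzero : (∫ x in (0:ℝ)..L, ∫ y in (0:ℝ)..π, CalAux.dB1 Φ x y) = 0 := by
    rw [CalAux.swap_integrals hL.le Real.pi_pos.le hunc3]
    have hinner : Set.EqOn (fun y => ∫ x in (0:ℝ)..L, CalAux.dB1 Φ x y)
        (fun _ => (0:ℝ)) (Set.uIcc (0:ℝ) π) := by
      intro y hy
      rw [Set.uIcc_of_le Real.pi_pos.le] at hy
      have hcont : Continuous fun t : ℝ => CalAux.dB1 Φ t y :=
        hunc3.comp (continuous_id.prodMk continuous_const)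
      have h := intervalIntegral.integral_eq_sub_of_hasDerivAt
        (f := fun t => CalAux.B1 Φ t y) (f' := fun t => CalAux.dB1 Φ t y)
        (fun t _ => CalAux.hasDerivAt_B1_1 Φ t y) (hcont.intervalIntegrable 0 L)
      simp only [h, CalAux.B1_per Φ hL hy, sub_self]
    rw [intervalIntegral.integral_congr hinner, intervalIntegral.integral_zero]
  unfold cal
  rw [houter, hzero, add_zero]
end
end

section
/- Let W : S → ℝ be a smooth function, L-periodic in the first variable, vanishing on ∂S, and not identically zero, which is the generating function of a monotone map Φ ∈ 𝒟_L(S,ω) with zero flux. If ∫∫_{[0,L]×[0,π]} (W(x,y) + W(x,Y(x,y))) sin y dx dy ≤ 0, then W attains a negative minimum at an interior point (x*,Y*), and (x*,Y*) is a fixed point of Φ with σ(x*,Y*) = W(x*,Y*) < 0. -/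
open Real intervalIntegral

noncomputable section

lemma hasDeriv1 {f : ℝ → ℝ → ℝ} (hf : ContDiff ℝ (⊤ : ℕ∞) (fun p : ℝ × ℝ => f p.1 p.2))
    (x y : ℝ) : HasDerivAt (fun t => f t y) (pd1 f x y) x := by
  have hd : DifferentiableAt ℝ (fun t => f t y) x := by
    have : (fun t => f t y) = (fun p : ℝ × ℝ => f p.1 p.2) ∘ (fun t => (t, y)) := rfl
    rw [this]
    exact ((hf.differentiable (by simp)) _).comp _
      (differentiableAt_id.prodMk (differentiableAt_const y))
  exact hd.hasDerivAt

lemma hasDeriv2 {f : ℝ → ℝ → ℝ} (hf : ContDiff ℝ (⊤ : ℕ∞) (fun p : ℝ × ℝ => f p.1 p.2))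
    (x y : ℝ) : HasDerivAt (fun t => f x t) (pd2 f x y) y := by
  have hd : DifferentiableAt ℝ (fun t => f x t) y := by
    have : (fun t => f x t) = (fun p : ℝ × ℝ => f p.1 p.2) ∘ (fun t => (x, t)) := rfl
    rw [this]
    exact ((hf.differentiable (by simp)) _).comp _
      ((differentiableAt_const x).prodMk differentiableAt_id)
  exact hd.hasDerivAt

lemma hasDerivAt_comp2_s9 {f : ℝ → ℝ → ℝ} (hf : ContDiff ℝ (⊤ : ℕ∞) (fun p : ℝ × ℝ => f p.1 p.2))
    {c₁ c₂ : ℝ → ℝ} {u v t : ℝ} (h₁ : HasDerivAt c₁ u t) (h₂ : HasDerivAt c₂ v t) :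
    HasDerivAt (fun s => f (c₁ s) (c₂ s))
      (pd1 f (c₁ t) (c₂ t) * u + pd2 f (c₁ t) (c₂ t) * v) t := by
  set F2 : ℝ × ℝ → ℝ := fun p => f p.1 p.2
  have hdF : DifferentiableAt ℝ F2 (c₁ t, c₂ t) := (hf.differentiable (by simp)) _
  set D := fderiv ℝ F2 (c₁ t, c₂ t) with hD
  have hF : HasFDerivAt F2 D (c₁ t, c₂ t) := hdF.hasFDerivAt
  have hc : HasDerivAt (fun s => (c₁ s, c₂ s)) (u, v) t := h₁.prodMk h₂
  have hcomp := hF.comp_hasDerivAt t hc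
  have h10 : D (1, 0) = pd1 f (c₁ t) (c₂ t) := by
    have : HasDerivAt (fun s => f s (c₂ t)) (D (1, 0)) (c₁ t) := by
      have hcurve : HasDerivAt (fun s => (s, c₂ t)) ((1 : ℝ), (0 : ℝ)) (c₁ t) :=
        (hasDerivAt_id _).prodMk (hasDerivAt_const _ _)
      exact hF.comp_hasDerivAt (c₁ t) hcurve
    exact this.deriv.symm
  have h01 : D (0, 1) = pd2 f (c₁ t) (c₂ t) := by
    have : HasDerivAt (fun s => f (c₁ t) s) (D (0, 1)) (c₂ t) := by
      have hcurve : HasDerivAt (fun s => (c₁ t, s)) ((0 : ℝ), (1 : ℝ)) (c₂ t) :=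
        (hasDerivAt_const _ _).prodMk (hasDerivAt_id _)
      exact hF.comp_hasDerivAt (c₂ t) hcurve
    exact this.deriv.symm
  have huv : (u, v) = u • ((1 : ℝ), (0 : ℝ)) + v • ((0 : ℝ), (1 : ℝ)) := by
    simp [Prod.ext_iff]
  have : D (u, v) = pd1 f (c₁ t) (c₂ t) * u + pd2 f (c₁ t) (c₂ t) * v := by
    rw [huv, map_add, map_smul, map_smul, h10, h01]
    simp [mul_comm]
  rwa [this] at hcomp

lemma my_integral_pos {f : ℝ → ℝ} {a b c : ℝ} (hab : a < b) (hf : Continuous f)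
    (h0 : ∀ x ∈ Set.Icc a b, 0 ≤ f x) (hc : c ∈ Set.Icc a b) (hfc : 0 < f c) :
    0 < ∫ x in a..b, f x := by
  have hev : ∀ᶠ x in nhds c, 0 < f x := ContinuousAt.eventually_lt continuousAt_const
    (hf.continuousAt (x := c)) hfc
  obtain ⟨δ, hδ, hball⟩ := Metric.eventually_nhds_iff.mp hev
  set u := max a (c - δ / 2) with hu
  set v := min b (c + δ / 2) with hv
  have hau : a ≤ u := le_max_left _ _
  have hvb : v ≤ b := min_le_left _ _
  have huc : u ≤ c := max_le hc.1 (by linarith)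
  have hcv : c ≤ v := le_min hc.2 (by linarith)
  have huv : u < v := by
    rcases lt_or_eq_of_le hc.2 with h | h
    · exact lt_of_le_of_lt huc (lt_min h (by linarith))
    · exact lt_of_lt_of_le (max_lt (h ▸ hab) (by linarith)) hcv
  have hpos : ∀ x ∈ Set.Ioo u v, 0 < f x := by
    intro x hx
    apply hball
    have h1 : c - δ / 2 ≤ u := le_max_right _ _
    have h2 : v ≤ c + δ / 2 := min_le_right _ _
    rw [Real.dist_eq, abs_sub_lt_iff]
    constructor <;> [skip; skip] <;> nlinarith [hx.1, hx.2]
  have hmid : 0 < ∫ x in u..v, f x :=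
    intervalIntegral_pos_of_pos_on (hf.intervalIntegrable u v) hpos huv
  have hleft : 0 ≤ ∫ x in a..u, f x :=
    intervalIntegral.integral_nonneg hau (fun x hx => h0 x ⟨hx.1, hx.2.trans (huc.trans hc.2)⟩)
  have hright : 0 ≤ ∫ x in v..b, f x :=
    intervalIntegral.integral_nonneg hvb (fun x hx => h0 x ⟨(hc.1.trans hcv).trans hx.1, hx.2⟩)
  have e1 : (∫ x in a..u, f x) + ∫ x in u..v, f x = ∫ x in a..v, f x :=
    intervalIntegral.integral_add_adjacent_intervals (hf.intervalIntegrable a u)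
      (hf.intervalIntegrable u v)
  have e2 : (∫ x in a..v, f x) + ∫ x in v..b, f x = ∫ x in a..b, f x :=
    intervalIntegral.integral_add_adjacent_intervals (hf.intervalIntegrable a v)
      (hf.intervalIntegrable v b)
  linarith


/-- If `W` is the generating function (smooth, `L`-periodic in `x`, vanishing on `∂S`,
not identically zero) of a monotone `Φ ∈ 𝒟_L(S,ω)` with zero flux, and
`∫∫_{[0,L]×[0,π]} (W(x,y) + W(x,Y(x,y))) sin y dx dy ≤ 0`, then `W` attains a negative
minimum at an interior point `(x*,Y*)`, which is a fixed point of `Φ` with action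
`σ(x*,Y*) = W(x*,Y*) < 0`. -/
theorem negative_min_fixed_point (L : ℝ) (hL : 0 < L) (Φ : StripMap L)
    (hmono : IsMonotone L Φ) (hflux : flux L Φ = 0)
    (W : ℝ → ℝ → ℝ) (hW : IsGenFun L Φ W)
    (hnorm0 : ∀ x : ℝ, W x 0 = 0) (hnormπ : ∀ x : ℝ, W x π = 0)
    (hnonzero : ∃ x : ℝ, ∃ y ∈ Set.Icc (0:ℝ) π, W x y ≠ 0)
    (σ : ℝ → ℝ → ℝ) (hσ : IsAction L Φ σ)
    (hint : (∫ x in (0:ℝ)..L, ∫ y in (0:ℝ)..π,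
        (W x y + W x (Φ.Y x y)) * Real.sin y) ≤ 0) :
    ∃ xs : ℝ, ∃ Ys ∈ Set.Ioo (0:ℝ) π,
      W xs Ys < 0 ∧
      (∀ (x : ℝ), ∀ y ∈ Set.Icc (0:ℝ) π, W xs Ys ≤ W x y) ∧
      Φ.X xs Ys = xs ∧ Φ.Y xs Ys = Ys ∧ σ xs Ys = W xs Ys := by
  obtain ⟨hWsm, hWper, hWgen⟩ := hW
  obtain ⟨hσsm, hσder, hσ00⟩ := hσ
  have hπ : (0:ℝ) < π := Real.pi_pos
  have hWc : Continuous (fun p : ℝ × ℝ => W p.1 p.2) := hWsm.continuous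
  have hXY : Continuous (fun p : ℝ × ℝ => (Φ.X p.1 p.2, Φ.Y p.1 p.2)) := Φ.smooth.continuous
  have hXc : Continuous (fun p : ℝ × ℝ => Φ.X p.1 p.2) := continuous_fst.comp hXY
  have hYc : Continuous (fun p : ℝ × ℝ => Φ.Y p.1 p.2) := continuous_snd.comp hXY
  have hXsm : ContDiff ℝ (⊤ : ℕ∞) (fun p : ℝ × ℝ => Φ.X p.1 p.2) := contDiff_fst.comp Φ.smooth
  have hYsm : ContDiff ℝ (⊤ : ℕ∞) (fun p : ℝ × ℝ => Φ.Y p.1 p.2) := contDiff_snd.comp Φ.smooth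
  -- minimum on the compact fundamental domain
  set K : Set (ℝ × ℝ) := Set.Icc 0 L ×ˢ Set.Icc 0 π with hK
  have hKc : IsCompact K := isCompact_Icc.prod isCompact_Icc
  have hKne : K.Nonempty := ⟨(0,0), ⟨⟨le_refl _, hL.le⟩, ⟨le_refl _, hπ.le⟩⟩⟩
  obtain ⟨p, hpK, hpmin⟩ := hKc.exists_isMinOn hKne hWc.continuousOn
  set xs := p.1 with hxs
  set Ys := p.2 with hYsdef
  have hYsIcc : Ys ∈ Set.Icc (0:ℝ) π := hpK.2
  have hmin' : ∀ q ∈ K, W xs Ys ≤ W q.1 q.2 := fun q hq => hpmin hq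
  have hfloor : ∀ x : ℝ, x - ⌊x / L⌋ * L ∈ Set.Icc (0:ℝ) L := by
    intro x
    exact ⟨Int.sub_floor_div_mul_nonneg x hL, (Int.sub_floor_div_mul_lt x hL).le⟩
  have hperW : ∀ y ∈ Set.Icc (0:ℝ) π, ∀ x : ℝ, W (x - ⌊x / L⌋ * L) y = W x y := by
    intro y hy x
    have hp : Function.Periodic (fun t => W t y) L := fun t => hWper t y hy
    exact hp.sub_int_mul_eq ⌊x / L⌋
  have hglobal : ∀ (x : ℝ), ∀ y ∈ Set.Icc (0:ℝ) π, W xs Ys ≤ W x y := by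
    intro x y hy
    rw [← hperW y hy x]
    exact hmin' (x - ⌊x / L⌋ * L, y) ⟨hfloor x, hy⟩
  -- the minimum value is negative
  have hneg : W xs Ys < 0 := by
    by_contra hcon
    push_neg at hcon
    have hnn : ∀ (x : ℝ), ∀ y ∈ Set.Icc (0:ℝ) π, 0 ≤ W x y :=
      fun x y hy => hcon.trans (hglobal x y hy)
    obtain ⟨xb, yb, hyb, hne⟩ := hnonzero
    have hposb : 0 < W xb yb := lt_of_le_of_ne (hnn xb yb hyb) (Ne.symm hne)
    have hyb0 : yb ≠ 0 := fun h => hne (by rw [h]; exact hnorm0 xb)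
    have hybπ : yb ≠ π := fun h => hne (by rw [h]; exact hnormπ xb)
    have hybI : yb ∈ Set.Ioo (0:ℝ) π :=
      ⟨lt_of_le_of_ne hyb.1 (Ne.symm hyb0), lt_of_le_of_ne hyb.2 hybπ⟩
    set xh := xb - ⌊xb / L⌋ * L with hxhdef
    have hxhI : xh ∈ Set.Icc (0:ℝ) L := hfloor xb
    have hWxh : W xh yb = W xb yb := hperW yb hyb xb
    have hhc : Continuous (fun p : ℝ × ℝ =>
        (W p.1 p.2 + W p.1 (Φ.Y p.1 p.2)) * Real.sin p.2) := by
      apply Continuous.mul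
      · exact hWc.add (hWc.comp (continuous_fst.prodMk hYc))
      · exact Real.continuous_sin.comp continuous_snd
    have hhx : ∀ x : ℝ, Continuous (fun y => (W x y + W x (Φ.Y x y)) * Real.sin y) :=
      fun x => hhc.comp (Continuous.prodMk_right x)
    have hhnn : ∀ x : ℝ, ∀ y ∈ Set.Icc (0:ℝ) π,
        0 ≤ (W x y + W x (Φ.Y x y)) * Real.sin y := by
      intro x y hy
      exact mul_nonneg (add_nonneg (hnn x y hy) (hnn x _ (Φ.mapsStrip x y hy)))
        (Real.sin_nonneg_of_nonneg_of_le_pi hy.1 hy.2)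
    have hgc : Continuous (fun x => ∫ y in (0:ℝ)..π,
        (W x y + W x (Φ.Y x y)) * Real.sin y) := by
      apply intervalIntegral.continuous_parametric_intervalIntegral_of_continuous'
      exact hhc
    have hgnn : ∀ x : ℝ, 0 ≤ ∫ y in (0:ℝ)..π, (W x y + W x (Φ.Y x y)) * Real.sin y :=
      fun x => intervalIntegral.integral_nonneg hπ.le (fun y hy => hhnn x y hy)
    have hgxh : 0 < ∫ y in (0:ℝ)..π, (W xh y + W xh (Φ.Y xh y)) * Real.sin y := by
      apply my_integral_pos hπ (hhx xh) (hhnn xh)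
        (Set.mem_Icc.mpr ⟨hybI.1.le, hybI.2.le⟩)
      have hs : 0 < Real.sin yb := Real.sin_pos_of_pos_of_lt_pi hybI.1 hybI.2
      have h2 : 0 ≤ W xh (Φ.Y xh yb) := hnn _ _ (Φ.mapsStrip xh yb hyb)
      have h3 : 0 < W xh yb := hWxh ▸ hposb
      nlinarith
    have hpos : 0 < ∫ x in (0:ℝ)..L, ∫ y in (0:ℝ)..π,
        (W x y + W x (Φ.Y x y)) * Real.sin y :=
      my_integral_pos hL hgc (fun x _ => hgnn x) hxhI hgxh
    linarith
  -- the minimum is interior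
  have hYsIoo : Ys ∈ Set.Ioo (0:ℝ) π := by
    refine ⟨lt_of_le_of_ne hYsIcc.1 ?_, lt_of_le_of_ne hYsIcc.2 ?_⟩
    · intro h
      rw [← h, hnorm0] at hneg
      exact lt_irrefl 0 hneg
    · intro h
      rw [h, hnormπ] at hneg
      exact lt_irrefl 0 hneg
  -- the partial derivatives of W vanish at the minimum
  have hpd1W : pd1 W xs Ys = 0 := by
    have hloc : IsLocalMin (fun t => W t Ys) xs :=
      Filter.Eventually.of_forall (fun t => hglobal t Ys hYsIcc)
    exact hloc.deriv_eq_zero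
  have hpd2W : pd2 W xs Ys = 0 := by
    have hloc : IsLocalMin (fun t => W xs t) Ys := by
      apply Filter.eventually_of_mem (Icc_mem_nhds hYsIoo.1 hYsIoo.2)
      intro y hy
      exact hglobal xs y hy
    exact hloc.deriv_eq_zero
  -- intermediate value: find y₀ with Y(xs,y₀) = Ys
  have hYxs : Continuous (fun t => Φ.Y xs t) := hYc.comp (Continuous.prodMk_right xs)
  have hivt := intermediate_value_Icc hπ.le hYxs.continuousOn
  rw [Φ.bdryLow, Φ.bdryHigh] at hivt
  obtain ⟨y₀, hy₀, hYy₀'⟩ := hivt hYsIcc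
  have hYy₀ : Φ.Y xs y₀ = Ys := hYy₀'
  have hgen := hWgen xs y₀ hy₀
  rw [hYy₀] at hgen
  have hsinYs : 0 < Real.sin Ys := Real.sin_pos_of_pos_of_lt_pi hYsIoo.1 hYsIoo.2
  have hXfix0 : Φ.X xs y₀ = xs := by
    have h1 := hgen.1
    rw [hpd2W] at h1
    rcases mul_eq_zero.mp h1 with h | h
    · linarith
    · exact absurd h hsinYs.ne'
  have hy₀Ys : y₀ = Ys := by
    have h2 := hgen.2
    rw [hpd1W] at h2
    exact Real.injOn_cos hy₀ hYsIcc (by linarith)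
  have hYfix : Φ.Y xs Ys = Ys := hy₀Ys ▸ hYy₀
  have hXfix : Φ.X xs Ys = xs := hy₀Ys ▸ hXfix0
  -- the action identity σ = W ∘ (id, Y) + (X − x) cos Y
  set F : ℝ → ℝ → ℝ :=
    fun a b => σ a b - W a (Φ.Y a b) - (Φ.X a b - a) * Real.cos (Φ.Y a b) with hFdef
  have hFc : Continuous (fun p : ℝ × ℝ => F p.1 p.2) := by
    apply Continuous.sub
    · exact hσsm.continuous.sub (hWc.comp (continuous_fst.prodMk hYc))
    · exact (hXc.sub continuous_fst).mul (Real.continuous_cos.comp hYc)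
  have hFd1 : ∀ (x : ℝ), ∀ y ∈ Set.Icc (0:ℝ) π, HasDerivAt (fun t => F t y) 0 x := by
    intro x y hy
    have hσ1 : HasDerivAt (fun t => σ t y) (pd1 σ x y) x := hasDeriv1 hσsm x y
    have hY1 : HasDerivAt (fun t => Φ.Y t y) (pd1 Φ.Y x y) x := hasDeriv1 hYsm x y
    have hX1 : HasDerivAt (fun t => Φ.X t y) (pd1 Φ.X x y) x := hasDeriv1 hXsm x y
    have hWcmp : HasDerivAt (fun t => W t (Φ.Y t y))
        (pd1 W x (Φ.Y x y) * 1 + pd2 W x (Φ.Y x y) * pd1 Φ.Y x y) x :=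
      hasDerivAt_comp2_s9 hWsm (hasDerivAt_id x) hY1
    have hcos : HasDerivAt (fun t => Real.cos (Φ.Y t y))
        (-Real.sin (Φ.Y x y) * pd1 Φ.Y x y) x :=
      (Real.hasDerivAt_cos (Φ.Y x y)).comp (h₂ := Real.cos) x hY1
    have hprod : HasDerivAt (fun t => (Φ.X t y - t) * Real.cos (Φ.Y t y))
        ((pd1 Φ.X x y - 1) * Real.cos (Φ.Y x y)
          + (Φ.X x y - x) * (-Real.sin (Φ.Y x y) * pd1 Φ.Y x y)) x :=
      (hX1.sub (hasDerivAt_id x)).mul hcos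
    have htot := (hσ1.sub hWcmp).sub hprod
    have heq : pd1 σ x y - (pd1 W x (Φ.Y x y) * 1 + pd2 W x (Φ.Y x y) * pd1 Φ.Y x y)
        - ((pd1 Φ.X x y - 1) * Real.cos (Φ.Y x y)
          + (Φ.X x y - x) * (-Real.sin (Φ.Y x y) * pd1 Φ.Y x y)) = 0 := by
      rw [(hσder x y hy).1, ← (hWgen x y hy).1, ← (hWgen x y hy).2]
      ring
    rw [heq] at htot
    exact htot
  have hFd2 : ∀ (x : ℝ), ∀ y ∈ Set.Icc (0:ℝ) π, HasDerivAt (fun t => F x t) 0 y := by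
    intro x y hy
    have hσ2 : HasDerivAt (fun t => σ x t) (pd2 σ x y) y := hasDeriv2 hσsm x y
    have hY2 : HasDerivAt (fun t => Φ.Y x t) (pd2 Φ.Y x y) y := hasDeriv2 hYsm x y
    have hX2 : HasDerivAt (fun t => Φ.X x t) (pd2 Φ.X x y) y := hasDeriv2 hXsm x y
    have hWcmp : HasDerivAt (fun t => W x (Φ.Y x t))
        (pd1 W x (Φ.Y x y) * 0 + pd2 W x (Φ.Y x y) * pd2 Φ.Y x y) y :=
      hasDerivAt_comp2_s9 hWsm (hasDerivAt_const y x) hY2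
    have hcos : HasDerivAt (fun t => Real.cos (Φ.Y x t))
        (-Real.sin (Φ.Y x y) * pd2 Φ.Y x y) y :=
      (Real.hasDerivAt_cos (Φ.Y x y)).comp (h₂ := Real.cos) y hY2
    have hprod : HasDerivAt (fun t => (Φ.X x t - x) * Real.cos (Φ.Y x t))
        (pd2 Φ.X x y * Real.cos (Φ.Y x y)
          + (Φ.X x y - x) * (-Real.sin (Φ.Y x y) * pd2 Φ.Y x y)) y :=
      (hX2.sub_const x).mul hcos
    have htot := (hσ2.sub hWcmp).sub hprod
    have heq : pd2 σ x y - (pd1 W x (Φ.Y x y) * 0 + pd2 W x (Φ.Y x y) * pd2 Φ.Y x y)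
        - (pd2 Φ.X x y * Real.cos (Φ.Y x y)
          + (Φ.X x y - x) * (-Real.sin (Φ.Y x y) * pd2 Φ.Y x y)) = 0 := by
      rw [(hσder x y hy).2, ← (hWgen x y hy).1]
      ring
    rw [heq] at htot
    exact htot
  have h0Icc : (0:ℝ) ∈ Set.Icc (0:ℝ) π := Set.mem_Icc.mpr ⟨le_refl 0, hπ.le⟩
  have hFx0 : F xs 0 = F 0 0 := by
    have hdiff : ∀ t : ℝ, HasDerivAt (fun s => F s 0) 0 t := fun t => hFd1 t 0 h0Icc
    exact is_const_of_deriv_eq_zero (fun t => (hdiff t).differentiableAt)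
      (fun t => (hdiff t).deriv) xs 0
  have hFvert : F xs Ys = F xs 0 := by
    have hsub : ∀ y ∈ Set.Icc (0:ℝ) Ys, (fun t => F xs t) y = (fun t => F xs t) 0 := by
      apply constant_of_has_deriv_right_zero
      · exact (hFc.comp (Continuous.prodMk_right xs)).continuousOn
      · intro t ht
        exact (hFd2 xs t ⟨ht.1, ht.2.le.trans hYsIcc.2⟩).hasDerivWithinAt
    exact hsub Ys (Set.mem_Icc.mpr ⟨hYsIcc.1, le_refl Ys⟩)
  have hF00 : F 0 0 = 0 := by
    have hFval : F 0 0 = σ 0 0 - W 0 (Φ.Y 0 0) - (Φ.X 0 0 - 0) * Real.cos (Φ.Y 0 0) := rfl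
    rw [hFval, Φ.bdryLow, hσ00, hflux, hnorm0, Real.cos_zero]
    ring
  have hσval : σ xs Ys = W xs Ys := by
    have hFv : F xs Ys = 0 := by rw [hFvert, hFx0, hF00]
    have hexp : σ xs Ys - W xs (Φ.Y xs Ys) - (Φ.X xs Ys - xs) * Real.cos (Φ.Y xs Ys) = 0 := hFv
    rw [hYfix, hXfix, sub_self, zero_mul, sub_zero] at hexp
    linarith
  exact ⟨xs, Ys, hYsIoo, hneg, hglobal, hXfix, hYfix, hσval⟩
end
end

section
/- Let K : ℝ → ℝ be continuous with δ ≤ K(t) ≤ 1, where δ > (4+√7)/8. Suppose ℓ ∈ ℝ satisfies 4π − 2π/√δ ≤ ℓ ≤ 4π/√δ − 2π. If θ solves θ' = cos²θ + K sin²θ with θ(0) = 0, then 3π/2 < θ(ℓ) < 5π/2, and consequently cos θ(ℓ) > 0. -/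
/-!
Since `cos²θ + K sin²θ = 1 - (1 - K) sin²θ` lies in `[δ, 1]`, the mean value inequality gives
`δ t ≤ θ t ≤ t` for `t ≥ 0`. With `s = √δ > (1 + √7)/4`, the lower end of the window for `ℓ`
yields `θ ℓ ≥ δ (4π - 2π/s) = 2π (2s² - s) > 3π/2`, and the upper end yields
`θ ℓ ≤ 4π/s - 2π < 5π/2` because `s > 8/9`.
-/

open Real

lemma le_cos_sq_add_mul_sin_sq {a k : ℝ} (ha : a ≤ 1) (hk : a ≤ k) (x : ℝ) :
    a ≤ cos x ^ 2 + k * sin x ^ 2 := by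
  nlinarith [sin_sq_add_cos_sq x, sq_nonneg (sin x), sq_nonneg (cos x)]

lemma cos_sq_add_mul_sin_sq_le_one {k : ℝ} (hk : k ≤ 1) (x : ℝ) :
    cos x ^ 2 + k * sin x ^ 2 ≤ 1 := by
  nlinarith [sin_sq_add_cos_sq x, sq_nonneg (sin x)]

lemma one_add_sqrt_seven_div_four_lt_sqrt {δ : ℝ} (hδ : (4 + √7) / 8 < δ) :
    (1 + √7) / 4 < √δ := by
  apply lt_sqrt_of_sq_lt
  nlinarith [sq_sqrt (show (0 : ℝ) ≤ 7 by norm_num)]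

lemma eight_div_nine_lt_one_add_sqrt_seven_div_four : (8 : ℝ) / 9 < (1 + √7) / 4 := by
  have : (23 : ℝ) / 9 < √7 := lt_sqrt_of_sq_lt (by norm_num)
  linarith

lemma three_pi_div_two_lt_sq_mul {s : ℝ} (hs : (1 + √7) / 4 < s) :
    3 * π / 2 < s ^ 2 * (4 * π - 2 * π / s) := by
  have hs0 : 0 < s := lt_of_le_of_lt (by positivity) hs
  -- `(1 + √7)/4` is the positive root of `8s² - 4s - 3`
  have hquad : 0 < 8 * s ^ 2 - 4 * s - 3 := by
    have h7 : √7 < 4 * s - 1 := by linarith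
    nlinarith [sq_sqrt (show (0 : ℝ) ≤ 7 by norm_num), sqrt_nonneg 7]
  have hexpand : s ^ 2 * (4 * π - 2 * π / s) = 2 * π * (2 * s ^ 2 - s) := by
    field_simp
    ring
  rw [hexpand]
  nlinarith [pi_pos]

lemma four_pi_div_sub_lt_five_pi_div_two {s : ℝ} (hs : (1 + √7) / 4 < s) :
    4 * π / s - 2 * π < 5 * π / 2 := by
  have hs89 := eight_div_nine_lt_one_add_sqrt_seven_div_four.trans hs
  rw [sub_lt_iff_lt_add, div_lt_iff₀ (by linarith)]
  nlinarith [pi_pos]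

lemma two_pi_div_le_four_pi {s : ℝ} (hs : (1 + √7) / 4 < s) : 2 * π / s ≤ 4 * π := by
  have hs89 := eight_div_nine_lt_one_add_sqrt_seven_div_four.trans hs
  rw [div_le_iff₀ (by linarith)]
  nlinarith [pi_pos]

theorem twist_ode_pinched_general (K θ : ℝ → ℝ) (δ ℓ : ℝ)
    (hδ : (4 + Real.sqrt 7) / 8 < δ)
    (hKl : ∀ t, δ ≤ K t) (hKu : ∀ t, K t ≤ 1)
    (hℓ1 : 4 * π - 2 * π / Real.sqrt δ ≤ ℓ)
    (hℓ2 : ℓ ≤ 4 * π / Real.sqrt δ - 2 * π)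
    (hθ0 : θ 0 = 0)
    (hθ : ∀ t, HasDerivAt θ (Real.cos (θ t) ^ 2 + K t * Real.sin (θ t) ^ 2) t) :
    3 * π / 2 < θ ℓ ∧ θ ℓ < 5 * π / 2 ∧ 0 < Real.cos (θ ℓ) := by
  have hs := one_add_sqrt_seven_div_four_lt_sqrt hδ
  have hδ0 : 0 ≤ δ := by linarith [sqrt_nonneg 7]
  have hδ1 : δ ≤ 1 := (hKl 0).trans (hKu 0)
  have hℓ0 : 0 ≤ ℓ := by linarith [two_pi_div_le_four_pi hs]
  have hdiff : Differentiable ℝ θ := fun t => (hθ t).differentiableAt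
  have hθ_ge : δ * ℓ ≤ θ ℓ := by
    have := mul_sub_le_image_sub_of_le_deriv hdiff
      (fun t => (hθ t).deriv ▸ le_cos_sq_add_mul_sin_sq hδ1 (hKl t) (θ t)) hℓ0
    rw [hθ0] at this
    linarith
  have hθ_le : θ ℓ ≤ ℓ := by
    have := image_sub_le_mul_sub_of_deriv_le hdiff
      (fun t => (hθ t).deriv ▸ cos_sq_add_mul_sin_sq_le_one (hKu t) (θ t)) hℓ0
    rw [hθ0] at this
    linarith
  have hlow : 3 * π / 2 < θ ℓ := by
    have hwindow := three_pi_div_two_lt_sq_mul hs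
    rw [sq_sqrt hδ0] at hwindow
    linarith [mul_le_mul_of_nonneg_left hℓ1 hδ0]
  have hup : θ ℓ < 5 * π / 2 := by linarith [four_pi_div_sub_lt_five_pi_div_two hs]
  refine ⟨hlow, hup, ?_⟩
  rw [← cos_sub_two_pi]
  exact cos_pos_of_mem_Ioo ⟨by linarith, by linarith⟩

/-- Key ODE estimate for the monotonicity of the Birkhoff return map: if
`δ > (4+√7)/8`, `K` is continuous with `δ ≤ K ≤ 1`, `ℓ` satisfies
`4π − 2π/√δ ≤ ℓ ≤ 4π/√δ − 2π`, and `θ` solves `θ' = cos²θ + K sin²θ` with `θ(0) = 0`,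
then `3π/2 < θ(ℓ) < 5π/2`, and consequently `cos θ(ℓ) > 0`. -/
theorem twist_ode_pinched (K θ : ℝ → ℝ) (δ ℓ : ℝ)
    (hδ : (4 + Real.sqrt 7) / 8 < δ)
    (hK : Continuous K) (hKl : ∀ t, δ ≤ K t) (hKu : ∀ t, K t ≤ 1)
    (hℓ1 : 4 * π - 2 * π / Real.sqrt δ ≤ ℓ)
    (hℓ2 : ℓ ≤ 4 * π / Real.sqrt δ - 2 * π)
    (hθ0 : θ 0 = 0)
    (hθ : ∀ t, HasDerivAt θ (Real.cos (θ t) ^ 2 + K t * Real.sin (θ t) ^ 2) t) :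
    3 * π / 2 < θ ℓ ∧ θ ℓ < 5 * π / 2 ∧ 0 < Real.cos (θ ℓ) :=
  twist_ode_pinched_general K θ δ ℓ hδ hKl hKu hℓ1 hℓ2 hθ0 hθ
end
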